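/- arXiv:1511.08628 — 11 statements merged into one kernel-verified Lean document; each statement's English description precedes it below -/
import Mathlib

section
/- Let I ⊆ ℝ² be a nonempty bounded set and let (u_req_i) and (u_imp_i), i = 1, …, k, be sequences with values in I. Suppose there are indices 1 < i_1 < i_2 < … < i_L ≤ k such that u_req_i = u_imp_i for every i ∈ {1, …, k} \ {i_1, …, i_L}, u_req_{i_ℓ} ≠ u_imp_{i_ℓ} for every ℓ ∈ {1, …, L}, and u_imp_{i_{ℓ+1}} = u_req_{i_ℓ} for every ℓ ∈ {1, …, L−1}. Then the accumulated error satisfies e_k = u_imp_{i_1} − u_req_{i_L}, and consequently ‖e_k‖ ≤ diam I, where diam I := sup{‖v − w‖ : v, w ∈ I}. -/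
/-!
Off the transition indices the summands vanish, so `e_k` is the sum of `u_imp (i_ℓ) - u_req (i_ℓ)`
over `ℓ`. The chain condition `u_imp (i_{ℓ+1}) = u_req (i_ℓ)` makes this sum telescope to
`u_imp (i_1) - u_req (i_L)`, a difference of two points of `I`, whose norm is at most `diam I`.
-/

theorem Fin.sum_sub_eq_of_succ_eq_castSucc {G : Type*} [AddCommGroup G] :
    ∀ {n : ℕ} (a b : Fin (n + 1) → G), (∀ i : Fin n, a i.succ = b i.castSucc) →
      ∑ i, (a i - b i) = a 0 - b (Fin.last n)
  | 0, a, b, _ => by simp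
  | n + 1, a, b, hchain => by
    have hinit : ∑ i : Fin (n + 1), (a i.castSucc - b i.castSucc) = a 0 - b (Fin.last n).castSucc :=
      Fin.sum_sub_eq_of_succ_eq_castSucc (a ∘ Fin.castSucc) (b ∘ Fin.castSucc)
        fun i => hchain i.castSucc
    rw [Fin.sum_univ_castSucc, hinit, ← Fin.succ_last, hchain (Fin.last n)]
    abel

/-- For a resource with delay whose request/implementation sequences take
values in a nonempty bounded set `I ⊆ ℝ²` and differ exactly at indices
`1 < i_1 < … < i_L ≤ k` with the telescoping property `u_imp_{i_{ℓ+1}} = u_req_{i_ℓ}`,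
the accumulated error satisfies `e_k = u_imp_{i_1} − u_req_{i_L}` and `‖e_k‖ ≤ diam I`. -/
theorem stmt1 (I : Set (EuclideanSpace ℝ (Fin 2)))
    (hbdd : Bornology.IsBounded I)
    (k : ℕ) (u_req u_imp : ℕ → EuclideanSpace ℝ (Fin 2))
    (hreqI : ∀ i ∈ Finset.Icc 1 k, u_req i ∈ I)
    (himpI : ∀ i ∈ Finset.Icc 1 k, u_imp i ∈ I)
    (L : ℕ) (hL : 1 ≤ L) (idx : Fin L → ℕ) (hmono : StrictMono idx)
    (h1 : 1 < idx ⟨0, by omega⟩) (hk : idx ⟨L - 1, by omega⟩ ≤ k)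
    (heq : ∀ i ∈ Finset.Icc 1 k, (∀ ℓ : Fin L, i ≠ idx ℓ) → u_req i = u_imp i)
    (hchain : ∀ ℓ : Fin L, ∀ h : (ℓ : ℕ) + 1 < L,
      u_imp (idx ⟨(ℓ : ℕ) + 1, h⟩) = u_req (idx ℓ)) :
    (∑ i ∈ Finset.Icc 1 k, (u_imp i - u_req i)) =
        u_imp (idx ⟨0, by omega⟩) - u_req (idx ⟨L - 1, by omega⟩) ∧
    ‖∑ i ∈ Finset.Icc 1 k, (u_imp i - u_req i)‖ ≤ Metric.diam I := by
  obtain ⟨n, rfl⟩ := Nat.exists_eq_add_of_le' hL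
  have hmem : ∀ ℓ, idx ℓ ∈ Finset.Icc 1 k := fun ℓ =>
    Finset.mem_Icc.2 ⟨h1.le.trans (hmono.monotone (Fin.zero_le ℓ)),
      (hmono.monotone (Fin.le_last ℓ)).trans hk⟩
  have hsupport : ∑ i ∈ Finset.Icc 1 k, (u_imp i - u_req i) =
      ∑ ℓ, (u_imp (idx ℓ) - u_req (idx ℓ)) := by
    refine (Finset.sum_of_injOn idx hmono.injective.injOn (fun ℓ _ => hmem ℓ) ?_
      fun _ _ => rfl).symm
    intro i hi hnot
    rw [heq i hi fun ℓ hiℓ => hnot ⟨ℓ, Finset.mem_coe.2 (Finset.mem_univ ℓ), hiℓ.symm⟩, sub_self]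
  have htelescope := hsupport.trans <| Fin.sum_sub_eq_of_succ_eq_castSucc _ _
    fun i => hchain i.castSucc i.succ.isLt
  refine ⟨htelescope, ?_⟩
  rw [htelescope, ← dist_eq_norm]
  exact Metric.dist_le_diam_of_mem hbdd (himpI _ (hmem _)) (hreqI _ (hmem _))
end

section
/- Fix d ≥ 1. Let Γ ∈ ℝ^{d×d} be symmetric and positive definite, let γ ∈ ℝ^d, and let α > 0 be such that αλ ≤ 1 for every eigenvalue λ of Γ. Let (x_k)_{k≥1} and (y_k)_{k≥1} be sequences in ℝ^d with x_{k+1} = y_k − α(Γ y_k + γ) for all k ≥ 1, set ε_k := y_k − x_k for k ≥ 1, and suppose there is a constant C ≥ 0 with ‖∑_{i=1}^{k} ε_i‖ ≤ C for all k ≥ 1. Then the running average of the implemented setpoints converges to the minimizer of J(x) = xᵀΓx + γx + a: lim_{k→∞} (1/k) ∑_{i=1}^{k} y_i = −Γ^{-1} γ. -/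
/-!
Since `0 < αλ ≤ 1` for every eigenvalue `λ` of `Γ`, the map `v ↦ v - α Γ v` is a contraction
with some factor `ρ < 1`. With `ε_k = y_k - x_k` we have
`y_{k+1} = (y_k - α Γ y_k) - α γ + ε_{k+1}` and `‖ε_{k+1}‖ ≤ 2C`, so `y` is bounded.
The sequence `z_k = y_k - ∑_{i ≤ k} ε_i` satisfies `z_{k+1} = z_k - α (Γ y_k + γ)`, so
`∑_{k ≤ n} (Γ y_k + γ) = α⁻¹ (z_1 - z_{n+1})` stays bounded, i.e. `Γ ȳ_n + γ = O(1/n)` for the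
running average `ȳ_n`; applying `Γ⁻¹` gives `ȳ_n → -Γ⁻¹ γ`.
-/

open Filter Topology Finset

lemma Finite.exists_le_lt_forall_le_of_forall_lt {ι : Type*} [Finite ι] {f : ι → ℝ} {a b : ℝ}
    (hab : a < b) (hf : ∀ i, f i < b) : ∃ c, a ≤ c ∧ c < b ∧ ∀ i, f i ≤ c := by
  cases isEmpty_or_nonempty ι
  · exact ⟨a, le_rfl, hab, isEmptyElim⟩
  · obtain ⟨i₀, hi₀⟩ := Finite.exists_max f
    exact ⟨max a (f i₀), le_max_left _ _, max_lt hab (hf i₀),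
      fun i => (hi₀ i).trans (le_max_right _ _)⟩

theorem OrthonormalBasis.norm_apply_le_of_apply_eq_smul {ι E : Type*} [Fintype ι]
    [NormedAddCommGroup E] [InnerProductSpace ℝ E] (b : OrthonormalBasis ι ℝ E)
    {T : E →ₗ[ℝ] E} {μ : ι → ℝ} (hT : ∀ i, T (b i) = μ i • b i) {ρ : ℝ} (hρ : 0 ≤ ρ)
    (hμ : ∀ i, |μ i| ≤ ρ) (v : E) : ‖T v‖ ≤ ρ * ‖v‖ := by
  have hrepr (i) : b.repr (T v) i = μ i * b.repr v i := by
    rw [b.repr_apply_apply]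
    conv_lhs => rw [← b.sum_repr v]
    simp only [map_sum, map_smul, hT, smul_smul, b.orthonormal.inner_right_fintype,
      b.repr_apply_apply, mul_comm]
  have hsq : ‖T v‖ ^ 2 ≤ (ρ * ‖v‖) ^ 2 := by
    rw [← b.repr.norm_map, ← b.repr.norm_map v, mul_pow, EuclideanSpace.real_norm_sq_eq,
      EuclideanSpace.real_norm_sq_eq, mul_sum]
    gcongr with i
    rw [hrepr, mul_pow, ← sq_abs (μ i)]
    gcongr
    exact hμ i
  exact (pow_le_pow_iff_left₀ (norm_nonneg _) (by positivity) two_ne_zero).mp hsq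

theorem Matrix.IsHermitian.norm_sub_smul_toEuclideanLin_le {n : Type*} [Fintype n]
    [DecidableEq n] {Γ : Matrix n n ℝ} (hΓ : Γ.IsHermitian) {α ρ : ℝ} (hρ0 : 0 ≤ ρ)
    (hρ : ∀ i, |1 - α * hΓ.eigenvalues i| ≤ ρ) (v : EuclideanSpace ℝ n) :
    ‖v - α • toEuclideanLin Γ v‖ ≤ ρ * ‖v‖ := by
  set b := hΓ.eigenvectorBasis
  have hΓb (i) : toEuclideanLin Γ (b i) = hΓ.eigenvalues i • b i := by
    apply WithLp.ofLp_injective 2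
    rw [ofLp_toLpLin, WithLp.ofLp_smul]
    exact hΓ.mulVec_eigenvectorBasis i
  have hT (i) : (LinearMap.id - α • toEuclideanLin Γ : _ →ₗ[ℝ] _) (b i)
      = (1 - α * hΓ.eigenvalues i) • b i := by
    rw [LinearMap.sub_apply, LinearMap.smul_apply, hΓb, LinearMap.id_apply, smul_smul, sub_smul,
      one_smul]
  exact b.norm_apply_le_of_apply_eq_smul hT hρ0 hρ v

theorem Matrix.tendsto_nhds_neg_toEuclideanLin_inv {𝕜 n ι : Type*} [RCLike 𝕜] [Fintype n]
    [DecidableEq n] {Γ : Matrix n n 𝕜} (hΓ : IsUnit Γ.det) {γ : EuclideanSpace 𝕜 n}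
    {w : ι → EuclideanSpace 𝕜 n} {l : Filter ι}
    (h : Tendsto (fun k => toEuclideanLin Γ (w k) + γ) l (𝓝 0)) :
    Tendsto w l (𝓝 (-(toEuclideanLin Γ⁻¹ γ))) := by
  have hinv (v) : toEuclideanLin Γ⁻¹ (toEuclideanLin Γ v) = v := by
    rw [← LinearMap.comp_apply, ← toLpLin_mul_same, nonsing_inv_mul _ hΓ, toLpLin_one,
      LinearMap.id_apply]
  simpa [Function.comp_def, hinv] using
    (((toEuclideanLin Γ⁻¹).continuous_of_finiteDimensional.tendsto 0).comp h).sub_const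
      (toEuclideanLin Γ⁻¹ γ)

lemma le_max_of_forall_le_mul_add {a : ℕ → ℝ} {ρ D : ℝ} (hρ0 : 0 ≤ ρ) (hρ1 : ρ < 1)
    (ha : ∀ k, 1 ≤ k → a (k + 1) ≤ ρ * a k + D) {k : ℕ} (hk : 1 ≤ k) :
    a k ≤ max (a 1) (D / (1 - ρ)) := by
  induction k, hk using Nat.le_induction with
  | base => exact le_max_left _ _
  | succ k hk ih =>
    have hD : D ≤ (1 - ρ) * max (a 1) (D / (1 - ρ)) := by
      rw [← div_le_iff₀' (by linarith)]
      exact le_max_right _ _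
    nlinarith [ha k hk, mul_le_mul_of_nonneg_left ih hρ0]

lemma norm_le_max_of_norm_sub_le {E : Type*} [SeminormedAddCommGroup E] {T : E → E}
    {ρ D : ℝ} (hρ0 : 0 ≤ ρ) (hρ1 : ρ < 1) (hT : ∀ v, ‖T v‖ ≤ ρ * ‖v‖) {y : ℕ → E}
    (hy : ∀ k, 1 ≤ k → ‖y (k + 1) - T (y k)‖ ≤ D) {k : ℕ} (hk : 1 ≤ k) :
    ‖y k‖ ≤ max ‖y 1‖ (D / (1 - ρ)) :=
  le_max_of_forall_le_mul_add (a := fun k => ‖y k‖) hρ0 hρ1 (fun k hk => by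
    linarith [norm_le_norm_add_norm_sub' (y (k + 1)) (T (y k)), hT (y k), hy k hk]) hk

lemma norm_le_two_mul_of_forall_norm_sum_Icc_le {E : Type*} [SeminormedAddCommGroup E]
    {e : ℕ → E} {C : ℝ} (he : ∀ k, 1 ≤ k → ‖∑ i ∈ Icc 1 k, e i‖ ≤ C) {k : ℕ} (hk : 1 ≤ k) :
    ‖e (k + 1)‖ ≤ 2 * C := by
  have : e (k + 1) = ∑ i ∈ Icc 1 (k + 1), e i - ∑ i ∈ Icc 1 k, e i := by
    rw [sum_Icc_succ_top (by omega), add_sub_cancel_left]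
  rw [this]
  linarith [norm_sub_le (∑ i ∈ Icc 1 (k + 1), e i) (∑ i ∈ Icc 1 k, e i), he k hk,
    he (k + 1) (by omega)]

lemma sum_Icc_eq_inv_smul_sub_of_forall_eq_sub_smul {E : Type*} [AddCommGroup E] [Module ℝ E]
    {z g : ℕ → E} {α : ℝ} (hα : α ≠ 0) (hz : ∀ k, 1 ≤ k → z (k + 1) = z k - α • g k) (n : ℕ) :
    ∑ k ∈ Icc 1 n, g k = α⁻¹ • (z 1 - z (n + 1)) := by
  induction n with
  | zero => simp
  | succ n ih =>
    rw [sum_Icc_succ_top (by omega), ih, hz (n + 1) (by omega), smul_sub, smul_sub, smul_sub,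
      smul_smul, inv_mul_cancel₀ hα, one_smul]
    abel

lemma tendsto_avg_nhds_zero_of_forall_eq_sub_smul {E : Type*} [NormedAddCommGroup E]
    [NormedSpace ℝ E] {z g : ℕ → E} {α M : ℝ} (hα : α ≠ 0)
    (hz : ∀ k, 1 ≤ k → z (k + 1) = z k - α • g k) (hM : ∀ k, 1 ≤ k → ‖z k‖ ≤ M) :
    Tendsto (fun n : ℕ => (n : ℝ)⁻¹ • ∑ k ∈ Icc 1 n, g k) atTop (𝓝 0) := by
  simp_rw [sum_Icc_eq_inv_smul_sub_of_forall_eq_sub_smul hα hz]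
  refine tendsto_inv_atTop_nhds_zero_nat.zero_smul_isBoundedUnder_le
    (isBoundedUnder_of ⟨‖α⁻¹‖ * (‖z 1‖ + M), fun n => ?_⟩)
  rw [Function.comp_apply, norm_smul]
  gcongr
  exact (norm_sub_le _ _).trans (add_le_add_right (hM (n + 1) (by omega)) _)

theorem stmt4_general (d : ℕ) (Γ : Matrix (Fin d) (Fin d) ℝ)
    (hpos : Γ.PosDef) (γ : EuclideanSpace ℝ (Fin d)) (α : ℝ) (hα : 0 < α)
    (heig : ∀ lam ∈ spectrum ℝ Γ, α * lam ≤ 1)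
    (x y : ℕ → EuclideanSpace ℝ (Fin d))
    (hx : ∀ k : ℕ, 1 ≤ k → x (k + 1) = y k - α • (Matrix.toEuclideanLin Γ (y k) + γ))
    (C : ℝ)
    (hbdd : ∀ k : ℕ, 1 ≤ k → ‖∑ i ∈ Finset.Icc 1 k, (y i - x i)‖ ≤ C) :
    Filter.Tendsto (fun k : ℕ => (k : ℝ)⁻¹ • ∑ i ∈ Finset.Icc 1 k, y i)
      Filter.atTop (nhds (-(Matrix.toEuclideanLin Γ⁻¹ γ))) := by
  set A := Matrix.toEuclideanLin Γ
  obtain ⟨ρ, hρ0, hρ1, hρ⟩ := Finite.exists_le_lt_forall_le_of_forall_lt zero_lt_one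
    fun i => sub_lt_self 1 (mul_pos hα (hpos.eigenvalues_pos i))
  have hcontr (v) : ‖v - α • A v‖ ≤ ρ * ‖v‖ :=
    hpos.isHermitian.norm_sub_smul_toEuclideanLin_le hρ0 (fun i => by
      have hi := heig _ (hpos.isHermitian.eigenvalues_mem_spectrum_real i)
      rw [abs_of_nonneg (sub_nonneg.2 hi)]
      exact hρ i) v
  have hstep (k) (hk : 1 ≤ k) : ‖y (k + 1) - (y k - α • A (y k))‖ ≤ 2 * C + α * ‖γ‖ := by
    have hsplit : y (k + 1) - (y k - α • A (y k)) = (y (k + 1) - x (k + 1)) - α • γ := by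
      rw [hx k hk]; module
    rw [hsplit]
    refine (norm_sub_le _ _).trans (add_le_add ?_ ?_)
    · exact norm_le_two_mul_of_forall_norm_sum_Icc_le hbdd hk
    · rw [norm_smul, Real.norm_of_nonneg hα.le]
  set z := fun k => y k - ∑ i ∈ Icc 1 k, (y i - x i)
  have hz (k) (hk : 1 ≤ k) : z (k + 1) = z k - α • (A (y k) + γ) := by
    simp only [z]
    rw [sum_Icc_succ_top (by omega), hx k hk]
    abel
  have hz_bdd (k) (hk : 1 ≤ k) : ‖z k‖ ≤ max ‖y 1‖ ((2 * C + α * ‖γ‖) / (1 - ρ)) + C :=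
    (norm_sub_le _ _).trans
      (add_le_add (norm_le_max_of_norm_sub_le hρ0 hρ1 hcontr hstep hk) (hbdd k hk))
  refine Matrix.tendsto_nhds_neg_toEuclideanLin_inv (isUnit_iff_ne_zero.2 hpos.det_pos.ne') ?_
  refine (tendsto_avg_nhds_zero_of_forall_eq_sub_smul hα.ne' hz hz_bdd).congr' ?_
  filter_upwards [eventually_ge_atTop 1] with n hn
  have hn : (n : ℝ) ≠ 0 := by positivity
  rw [sum_add_distrib, sum_const, Nat.card_Icc, Nat.add_sub_cancel, ← Nat.cast_smul_eq_nsmul ℝ,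
    smul_add, smul_smul, inv_mul_cancel₀ hn, one_smul, map_smul, map_sum]

/-- For a symmetric positive definite `Γ`, step size `α > 0` with `αλ ≤ 1` for
every eigenvalue `λ` of `Γ`, and sequences satisfying the gradient-descent recursion
`x_{k+1} = y_k − α(Γ y_k + γ)` with total implementation error `∑_{i=1}^k (y_i − x_i)`
bounded in norm by `C`, the running average of `y` converges to the minimizer `−Γ⁻¹γ`. -/
theorem stmt4 (d : ℕ) (hd : 1 ≤ d) (Γ : Matrix (Fin d) (Fin d) ℝ) (hsymm : Γ.IsSymm)
    (hpos : Γ.PosDef) (γ : EuclideanSpace ℝ (Fin d)) (α : ℝ) (hα : 0 < α)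
    (heig : ∀ lam ∈ spectrum ℝ Γ, α * lam ≤ 1)
    (x y : ℕ → EuclideanSpace ℝ (Fin d))
    (hx : ∀ k : ℕ, 1 ≤ k → x (k + 1) = y k - α • (Matrix.toEuclideanLin Γ (y k) + γ))
    (C : ℝ) (hC : 0 ≤ C)
    (hbdd : ∀ k : ℕ, 1 ≤ k → ‖∑ i ∈ Finset.Icc 1 k, (y i - x i)‖ ≤ C) :
    Filter.Tendsto (fun k : ℕ => (k : ℝ)⁻¹ • ∑ i ∈ Finset.Icc 1 k, y i)
      Filter.atTop (nhds (-(Matrix.toEuclideanLin Γ⁻¹ γ))) :=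
  stmt4_general d Γ hpos γ α hα heig x y hx C hbdd
end

section
/- Fix d ≥ 1. Let Γ ∈ ℝ^{d×d} be symmetric and positive definite, let γ ∈ ℝ^d, and let α > 0 be such that αλ ≤ 1 for every eigenvalue λ of Γ; let r := ρ(I − αΓ) be the spectral radius of I − αΓ (so 0 ≤ r < 1). Let (x_k)_{k≥1} and (y_k)_{k≥1} be sequences in ℝ^d with x_{k+1} = y_k − α(Γ y_k + γ) for all k ≥ 1, set ε_k := y_k − x_k for k ≥ 1 and ε_0 := 0, and suppose there is a constant C ≥ 0 with ‖∑_{i=1}^{k} ε_i‖ ≤ C for all k ≥ 1. Then for every k ≥ 1, ‖(1/k) ∑_{i=1}^{k} y_i − (−Γ^{-1}γ)‖ ≤ ((1 − r^k)/(k(1 − r))) · (‖ψ‖ + ‖Γ^{-1}‖ ‖γ‖ r² + C), where ψ := x_1 + 2αγ − α²Γγ and ‖Γ^{-1}‖ is the induced ℓ2 (operator) norm of Γ^{-1}. -/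
/-!
With `M = I - αΓ` and `x* = -Γ⁻¹γ`, a gradient step reads `x_{k+1} - x* = M (y_k - x*)`. Hence the
partial sums `S_k = ∑_{i ≤ k} (y_i - x*)` satisfy
`S_{k+1} = (x_1 - x*) + M S_k + ∑_{i ≤ k+1} ε_i`, and since `M` is symmetric its operator norm is
its spectral radius `r < 1`, so `‖S_k‖ ≤ (1 + r + ⋯ + r^{k-1}) (‖x_1 - x*‖ + C)`. Finally
`x_1 - x* = ψ + Γ⁻¹ M² γ`, which gives the bound on `‖x_1 - x*‖`.
-/

open Finset
open scoped ENNReal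

theorem sum_Icc_succ_sub_eq {E : Type*} [AddCommGroup E] {L : E →+ E} {x y : ℕ → E} {z : E}
    (hx : ∀ k, 1 ≤ k → x (k + 1) - z = L (y k - z)) (k : ℕ) :
    ∑ i ∈ Icc 1 (k + 1), (y i - z) =
      (x 1 - z) + L (∑ i ∈ Icc 1 k, (y i - z)) + ∑ i ∈ Icc 1 (k + 1), (y i - x i) := by
  have hxsum : ∀ n, ∑ i ∈ Icc 1 (n + 1), (x i - z) =
      (x 1 - z) + L (∑ i ∈ Icc 1 n, (y i - z)) := by
    intro n
    induction n with
    | zero => simp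
    | succ n ih =>
      rw [sum_Icc_succ_top (by omega), ih, hx (n + 1) (by omega), sum_Icc_succ_top (by omega),
        map_add, add_assoc]
  have hsplit : ∀ i, y i - z = (y i - x i) + (x i - z) := fun i => (sub_add_sub_cancel _ _ _).symm
  rw [sum_congr rfl fun i _ => hsplit i, sum_add_distrib, hxsum, add_comm]

section PerturbedContraction

variable {E : Type*} [SeminormedAddCommGroup E] {L : E →+ E} {x y : ℕ → E} {z : E} {r C : ℝ}

theorem norm_sum_Icc_sub_le_geom_sum (hr : 0 ≤ r) (hL : ∀ v, ‖L v‖ ≤ r * ‖v‖)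
    (hx : ∀ k, 1 ≤ k → x (k + 1) - z = L (y k - z))
    (hbdd : ∀ k, 1 ≤ k → ‖∑ i ∈ Icc 1 k, (y i - x i)‖ ≤ C) (k : ℕ) :
    ‖∑ i ∈ Icc 1 k, (y i - z)‖ ≤ (∑ t ∈ range k, r ^ t) * (‖x 1 - z‖ + C) := by
  induction k with
  | zero => simp
  | succ k ih =>
    calc ‖∑ i ∈ Icc 1 (k + 1), (y i - z)‖
        ≤ ‖x 1 - z‖ + r * ‖∑ i ∈ Icc 1 k, (y i - z)‖ + C := by
          rw [sum_Icc_succ_sub_eq hx]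
          grw [norm_add₃_le, hL, hbdd (k + 1) (by omega)]
      _ ≤ ‖x 1 - z‖ + r * ((∑ t ∈ range k, r ^ t) * (‖x 1 - z‖ + C)) + C := by gcongr
      _ = (∑ t ∈ range (k + 1), r ^ t) * (‖x 1 - z‖ + C) := by rw [geom_sum_succ]; ring

theorem norm_average_sub_le [NormedSpace ℝ E] (hr0 : 0 ≤ r) (hr1 : r ≠ 1)
    (hL : ∀ v, ‖L v‖ ≤ r * ‖v‖) (hx : ∀ k, 1 ≤ k → x (k + 1) - z = L (y k - z))
    (hbdd : ∀ k, 1 ≤ k → ‖∑ i ∈ Icc 1 k, (y i - x i)‖ ≤ C) {k : ℕ} (hk : k ≠ 0) :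
    ‖(k : ℝ)⁻¹ • ∑ i ∈ Icc 1 k, y i - z‖ ≤ (1 - r ^ k) / (k * (1 - r)) * (‖x 1 - z‖ + C) := by
  have hk' : (k : ℝ) ≠ 0 := Nat.cast_ne_zero.2 hk
  have hmean : (k : ℝ)⁻¹ • ∑ i ∈ Icc 1 k, y i - z = (k : ℝ)⁻¹ • ∑ i ∈ Icc 1 k, (y i - z) := by
    rw [sum_sub_distrib, sum_const, Nat.card_Icc, Nat.add_sub_cancel, ← Nat.cast_smul_eq_nsmul ℝ,
      smul_sub, inv_smul_smul₀ hk']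
  calc ‖(k : ℝ)⁻¹ • ∑ i ∈ Icc 1 k, y i - z‖
      ≤ (k : ℝ)⁻¹ * ((∑ t ∈ range k, r ^ t) * (‖x 1 - z‖ + C)) := by
        rw [hmean, norm_smul, norm_inv, RCLike.norm_natCast]
        gcongr
        exact norm_sum_Icc_sub_le_geom_sum hr0 hL hx hbdd k
    _ = (1 - r ^ k) / (k * (1 - r)) * (‖x 1 - z‖ + C) := by
        rw [geom_sum_eq hr1, ← mul_assoc, ← neg_div_neg_eq, neg_sub, neg_sub]
        field_simp

end PerturbedContraction

section GradientStep

variable {E : Type*} [AddCommGroup E] [Module ℝ E] (G : Module.End ℝ E) (α : ℝ)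

theorem gradient_step_sub_eq {γ z : E} (hz : G z + γ = 0) (y : E) :
    y - α • (G y + γ) - z = (1 - α • G) (y - z) := by
  have hGz : G z = -γ := eq_neg_of_add_eq_zero_left hz
  simp only [LinearMap.sub_apply, Module.End.one_apply, LinearMap.smul_apply, map_sub, hGz]
  module

theorem add_inv_apply_eq {Ginv : Module.End ℝ E} (hinv : Ginv * G = 1) (x γ : E) :
    x + Ginv γ = (x + (2 * α) • γ - α ^ 2 • G γ) + Ginv ((1 - α • G) ((1 - α • G) γ)) := by
  have h : ∀ v, Ginv (G v) = v := fun v => LinearMap.congr_fun hinv v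
  simp only [LinearMap.sub_apply, Module.End.one_apply, LinearMap.smul_apply, map_sub, map_smul, h]
  module

end GradientStep

theorem norm_add_inv_apply_le {E : Type*} [SeminormedAddCommGroup E] [NormedSpace ℝ E]
    (G : Module.End ℝ E) (α : ℝ) {Ginv : Module.End ℝ E} (hinv : Ginv * G = 1) {r K : ℝ}
    (hr : 0 ≤ r) (hK : 0 ≤ K) (hM : ∀ v, ‖(1 - α • G) v‖ ≤ r * ‖v‖)
    (hGinv : ∀ v, ‖Ginv v‖ ≤ K * ‖v‖) (x γ : E) :
    ‖x + Ginv γ‖ ≤ ‖x + (2 * α) • γ - α ^ 2 • G γ‖ + K * ‖γ‖ * r ^ 2 := by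
  calc ‖x + Ginv γ‖
      ≤ ‖x + (2 * α) • γ - α ^ 2 • G γ‖ + K * ‖(1 - α • G) ((1 - α • G) γ)‖ := by
        rw [add_inv_apply_eq G α hinv]
        exact (norm_add_le _ _).trans (by grw [hGinv])
    _ ≤ ‖x + (2 * α) • γ - α ^ 2 • G γ‖ + K * (r * (r * ‖γ‖)) := by grw [hM, hM]
    _ = ‖x + (2 * α) • γ - α ^ 2 • G γ‖ + K * ‖γ‖ * r ^ 2 := by ring

theorem spectralRadius_lt_of_finite {𝕜 A : Type*} [NormedField 𝕜] [Ring A] [Algebra 𝕜 A] {a : A}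
    {c : ℝ≥0∞} (hfin : (spectrum 𝕜 a).Finite) (hc : 0 < c)
    (h : ∀ k ∈ spectrum 𝕜 a, (‖k‖₊ : ℝ≥0∞) < c) : spectralRadius 𝕜 a < c := by
  lift spectrum 𝕜 a to Finset 𝕜 using hfin with s hs
  rw [spectralRadius, ← hs]
  simp_rw [Finset.mem_coe, ← Finset.sup_eq_iSup]
  exact (Finset.sup_lt_iff hc).2 fun k hk => h k (hs ▸ Finset.mem_coe.2 hk)

namespace Matrix

theorem IsHermitian.spectralRadius_eq_nnnorm {𝕜 n : Type*} [RCLike 𝕜] [Fintype n] [DecidableEq n]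
    {A : Matrix n n 𝕜} (hA : A.IsHermitian) :
    spectralRadius 𝕜 A = ‖toEuclideanCLM (𝕜 := 𝕜) A‖₊ := by
  rw [← ContinuousLinearMap.spectralRadius_eq_nnnorm _ (hA.isSelfAdjoint.map toEuclideanCLM),
    spectralRadius, spectralRadius, AlgEquiv.spectrum_eq]

theorem IsHermitian.norm_toEuclideanLin_le {𝕜 n : Type*} [RCLike 𝕜] [Fintype n]
    [DecidableEq n] {A : Matrix n n 𝕜} (hA : A.IsHermitian) (v : EuclideanSpace 𝕜 n) :
    ‖toEuclideanLin A v‖ ≤ (spectralRadius 𝕜 A).toReal * ‖v‖ := by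
  rw [hA.spectralRadius_eq_nnnorm, ENNReal.coe_toReal, coe_nnnorm]
  exact (toEuclideanCLM (𝕜 := 𝕜) A).le_opNorm v

section toEuclideanLin

variable {𝕜 n : Type*} [RCLike 𝕜] [Fintype n] [DecidableEq n] {A : Matrix n n 𝕜}

theorem toEuclideanLin_one_sub_smul (c : 𝕜) :
    toEuclideanLin (1 - c • A) = 1 - c • toEuclideanLin A := by
  rw [map_sub, map_smul, toLpLin_one]
  rfl

theorem toEuclideanLin_nonsing_inv_mul (h : IsUnit A.det) :
    toEuclideanLin A⁻¹ * toEuclideanLin A = 1 := by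
  rw [Module.End.mul_eq_comp, ← toLpLin_mul_same, nonsing_inv_mul A h, toLpLin_one]
  rfl

theorem toEuclideanLin_mul_nonsing_inv (h : IsUnit A.det) :
    toEuclideanLin A * toEuclideanLin A⁻¹ = 1 := by
  rw [Module.End.mul_eq_comp, ← toLpLin_mul_same, mul_nonsing_inv A h, toLpLin_one]
  rfl

end toEuclideanLin

variable {n : Type*} [Fintype n] [DecidableEq n] {Γ : Matrix n n ℝ} {α : ℝ}

theorem PosDef.spectrum_one_sub_smul_subset (hΓ : Γ.PosDef) (hα : 0 < α)
    (heig : ∀ lam ∈ spectrum ℝ Γ, α * lam ≤ 1) : spectrum ℝ (1 - α • Γ) ⊆ Set.Ico 0 1 := by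
  intro m hm
  have : (1 : Matrix n n ℝ) - α • Γ = algebraMap ℝ _ 1 - (Units.mk0 α hα.ne') • Γ := by
    rw [map_one]; rfl
  rw [this, ← spectrum.singleton_sub_eq, spectrum.unit_smul_eq_smul] at hm
  obtain ⟨_, rfl, _, ⟨lam, hlam, rfl⟩, rfl⟩ := hm
  have hpos : 0 < lam := by
    rw [hΓ.1.spectrum_real_eq_range_eigenvalues] at hlam
    obtain ⟨i, rfl⟩ := hlam
    exact hΓ.eigenvalues_pos i
  have := heig lam hlam
  simp only [Units.val_mk0, smul_eq_mul, Set.mem_Ico]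
  constructor <;> nlinarith

theorem PosDef.spectralRadius_one_sub_smul_lt_one (hΓ : Γ.PosDef) (hα : 0 < α)
    (heig : ∀ lam ∈ spectrum ℝ Γ, α * lam ≤ 1) : spectralRadius ℝ (1 - α • Γ) < 1 :=
  spectralRadius_lt_of_finite (finite_spectrum _) one_pos fun m hm => by
    obtain ⟨hm0, hm1⟩ := hΓ.spectrum_one_sub_smul_subset hα heig hm
    rw [ENNReal.coe_lt_one_iff, ← NNReal.coe_lt_one, coe_nnnorm, Real.norm_eq_abs, abs_lt]
    exact ⟨by linarith, hm1⟩

end Matrix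

theorem stmt5_general (d : ℕ) (Γ : Matrix (Fin d) (Fin d) ℝ)
    (hpos : Γ.PosDef) (γ : EuclideanSpace ℝ (Fin d)) (α : ℝ) (hα : 0 < α)
    (heig : ∀ lam ∈ spectrum ℝ Γ, α * lam ≤ 1)
    (r : ℝ) (hr : r = (spectralRadius ℝ (1 - α • Γ)).toReal)
    (x y : ℕ → EuclideanSpace ℝ (Fin d))
    (hx : ∀ k : ℕ, 1 ≤ k → x (k + 1) = y k - α • (Matrix.toEuclideanLin Γ (y k) + γ))
    (C : ℝ)
    (hbdd : ∀ k : ℕ, 1 ≤ k → ‖∑ i ∈ Finset.Icc 1 k, (y i - x i)‖ ≤ C)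
    (ψ : EuclideanSpace ℝ (Fin d))
    (hψ : ψ = x 1 + (2 * α) • γ - (α ^ 2) • Matrix.toEuclideanLin Γ γ) :
    ∀ k : ℕ, 1 ≤ k →
      ‖(k : ℝ)⁻¹ • (∑ i ∈ Finset.Icc 1 k, y i) - (-(Matrix.toEuclideanLin Γ⁻¹ γ))‖ ≤
        ((1 - r ^ k) / ((k : ℝ) * (1 - r))) *
          (‖ψ‖ + ‖Matrix.toEuclideanCLM (𝕜 := ℝ) Γ⁻¹‖ * ‖γ‖ * r ^ 2 + C) := by
  intro k hk
  set G := Matrix.toEuclideanLin Γ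
  set Ginv := Matrix.toEuclideanLin Γ⁻¹
  have hdet : IsUnit Γ.det := isUnit_iff_ne_zero.2 hpos.det_pos.ne'
  have hr0 : 0 ≤ r := hr ▸ ENNReal.toReal_nonneg
  have hr1 : r < 1 := hr ▸ ENNReal.toReal_lt_of_lt_ofReal
    (ENNReal.ofReal_one ▸ hpos.spectralRadius_one_sub_smul_lt_one hα heig)
  have hM : ∀ v, ‖(1 - α • G) v‖ ≤ r * ‖v‖ := fun v =>
    hr ▸ Matrix.toEuclideanLin_one_sub_smul (A := Γ) α ▸
      (Matrix.isHermitian_one.sub (hpos.1.smul (IsSelfAdjoint.all α))).norm_toEuclideanLin_le v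
  have hcrit : G (-Ginv γ) + γ = 0 := by
    rw [map_neg, ← Module.End.mul_apply, Matrix.toEuclideanLin_mul_nonsing_inv hdet,
      Module.End.one_apply, neg_add_cancel]
  have hstep : ∀ k, 1 ≤ k → x (k + 1) - -Ginv γ = (1 - α • G) (y k - -Ginv γ) := fun k hk => by
    rw [hx k hk, gradient_step_sub_eq G α hcrit]
  have hx1 : ‖x 1 - -Ginv γ‖ ≤ ‖ψ‖ + ‖Matrix.toEuclideanCLM (𝕜 := ℝ) Γ⁻¹‖ * ‖γ‖ * r ^ 2 := by
    rw [sub_neg_eq_add, hψ]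
    exact norm_add_inv_apply_le G α (Matrix.toEuclideanLin_nonsing_inv_mul hdet) hr0
      (norm_nonneg _) hM (Matrix.toEuclideanCLM (𝕜 := ℝ) Γ⁻¹).le_opNorm _ _
  have hfactor : 0 ≤ (1 - r ^ k) / (k * (1 - r)) :=
    div_nonneg (sub_nonneg.2 (pow_le_one₀ hr0 hr1.le)) (by have := sub_pos.2 hr1; positivity)
  calc _ ≤ (1 - r ^ k) / (k * (1 - r)) * (‖x 1 - -Ginv γ‖ + C) :=
        norm_average_sub_le (L := (1 - α • G).toAddMonoidHom) hr0 hr1.ne hM hstep hbdd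
          (by omega)
    _ ≤ _ := by gcongr

/-- Quantitative version of the convergence result: under the hypotheses of
Statement 4, with `r = ρ(I − αΓ)` the spectral radius of `I − αΓ` and
`ψ = x_1 + 2αγ − α²Γγ`, for every `k ≥ 1`,
`‖(1/k) ∑_{i=1}^k y_i − (−Γ⁻¹γ)‖ ≤ ((1 − r^k)/(k(1 − r))) (‖ψ‖ + ‖Γ⁻¹‖‖γ‖r² + C)`. -/
theorem stmt5 (d : ℕ) (hd : 1 ≤ d) (Γ : Matrix (Fin d) (Fin d) ℝ) (hsymm : Γ.IsSymm)
    (hpos : Γ.PosDef) (γ : EuclideanSpace ℝ (Fin d)) (α : ℝ) (hα : 0 < α)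
    (heig : ∀ lam ∈ spectrum ℝ Γ, α * lam ≤ 1)
    (r : ℝ) (hr : r = (spectralRadius ℝ (1 - α • Γ)).toReal)
    (x y : ℕ → EuclideanSpace ℝ (Fin d))
    (hx : ∀ k : ℕ, 1 ≤ k → x (k + 1) = y k - α • (Matrix.toEuclideanLin Γ (y k) + γ))
    (C : ℝ) (hC : 0 ≤ C)
    (hbdd : ∀ k : ℕ, 1 ≤ k → ‖∑ i ∈ Finset.Icc 1 k, (y i - x i)‖ ≤ C)
    (ψ : EuclideanSpace ℝ (Fin d))
    (hψ : ψ = x 1 + (2 * α) • γ - (α ^ 2) • Matrix.toEuclideanLin Γ γ) :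
    ∀ k : ℕ, 1 ≤ k →
      ‖(k : ℝ)⁻¹ • (∑ i ∈ Finset.Icc 1 k, y i) - (-(Matrix.toEuclideanLin Γ⁻¹ γ))‖ ≤
        ((1 - r ^ k) / ((k : ℝ) * (1 - r))) *
          (‖ψ‖ + ‖Matrix.toEuclideanCLM (𝕜 := ℝ) Γ⁻¹‖ * ‖γ‖ * r ^ 2 + C) :=
  stmt5_general d Γ hpos γ α hα heig r hr x y hx C hbdd ψ hψ
end

section
/- Let n ≥ 1 and let 𝕊 = {S_1, …, S_n} be a collection of finite nonempty subsets of ℝ with maximum stepsize Δ_𝕊. Let (i_k)_{k≥1} be any sequence with i_k ∈ {1, …, n}, and let (P_req_k)_{k≥1} be any sequence with P_req_k ∈ [min S_{i_k}, max S_{i_k}] for every k. Define e_0 := 0 and recursively P_imp_k := proj_{S_{i_k}}(P_req_k − e_{k−1}) and e_k := e_{k−1} + P_imp_k − P_req_k, where proj_{S}(x) is any element of S at minimal distance from x. Then |e_k| ≤ Δ_𝕊/2 for all k ≥ 1. -/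
/-!
Every request lies in `conv S_{i_k}`, and every point of `conv S` is within `Δ_S / 2` of `S`
(it sits between two consecutive elements). So if `|e_{k-1}| ≤ Δ_𝕊 / 2`, the shifted request
`P_req_k − e_{k−1}` lies in `conv S_{i_k}` enlarged by `Δ_𝕊 / 2` on each side, hence is within
`Δ_𝕊 / 2` of `S_{i_k}`; the projection error, which is exactly `e_k`, is no larger.
-/

/-- The maximum stepsize of a finite set `S ⊂ ℝ`: the largest gap between consecutive
elements (`0` if `S` is a singleton, since the set of gaps is then empty and `sSup ∅ = 0`). -/
noncomputable def maxStep (S : Finset ℝ) : ℝ :=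
  sSup {d : ℝ | ∃ a ∈ S, ∃ b ∈ S, a < b ∧ (∀ c ∈ S, c ≤ a ∨ b ≤ c) ∧ d = b - a}

/-- The maximum stepsize of a finite collection `𝕊 = {S_1, …, S_n}`. -/
noncomputable def maxStepColl {n : ℕ} (S : Fin n → Finset ℝ) : ℝ :=
  sSup (Set.range fun i => maxStep (S i))

open Finset

lemma maxStep_nonneg (S : Finset ℝ) : 0 ≤ maxStep S :=
  Real.sSup_nonneg fun _ ⟨_, _, _, _, hab, _, hd⟩ => hd ▸ sub_nonneg.2 hab.le

lemma sub_le_maxStep {S : Finset ℝ} {a b : ℝ} (ha : a ∈ S) (hb : b ∈ S) (hab : a < b)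
    (hgap : ∀ c ∈ S, c ≤ a ∨ b ≤ c) : b - a ≤ maxStep S := by
  refine le_csSup ⟨S.max' ⟨a, ha⟩ - S.min' ⟨a, ha⟩, ?_⟩ ⟨a, ha, b, hb, hab, hgap, rfl⟩
  rintro _ ⟨a', ha', b', hb', -, -, rfl⟩
  linarith [S.le_max' b' hb', S.min'_le a' ha']

lemma maxStep_le_maxStepColl {n : ℕ} (S : Fin n → Finset ℝ) (i : Fin n) :
    maxStep (S i) ≤ maxStepColl S :=
  le_csSup (Set.finite_range _).bddAbove ⟨i, rfl⟩

lemma exists_abs_sub_le_half_maxStep {S : Finset ℝ} (hS : S.Nonempty) {t : ℝ}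
    (ht : t ∈ Set.Icc (S.min' hS) (S.max' hS)) : ∃ s ∈ S, |s - t| ≤ maxStep S / 2 := by
  have hA : (S.filter (· ≤ t)).Nonempty := ⟨_, mem_filter.2 ⟨S.min'_mem hS, ht.1⟩⟩
  have hB : (S.filter (t ≤ ·)).Nonempty := ⟨_, mem_filter.2 ⟨S.max'_mem hS, ht.2⟩⟩
  obtain ⟨haS, hat⟩ := mem_filter.1 ((S.filter (· ≤ t)).max'_mem hA)
  obtain ⟨hbS, htb⟩ := mem_filter.1 ((S.filter (t ≤ ·)).min'_mem hB)
  set a := (S.filter (· ≤ t)).max' hA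
  set b := (S.filter (t ≤ ·)).min' hB
  rcases hat.eq_or_lt with hat_eq | hat_lt
  · exact ⟨a, haS, by rw [hat_eq, sub_self, abs_zero]; linarith [maxStep_nonneg S]⟩
  have hgap : ∀ c ∈ S, c ≤ a ∨ b ≤ c := fun c hc => (le_total c t).imp
    (fun h => le_max' _ c (mem_filter.2 ⟨hc, h⟩)) (fun h => min'_le _ c (mem_filter.2 ⟨hc, h⟩))
  have hab := sub_le_maxStep haS hbS (hat_lt.trans_le htb) hgap
  rcases le_total (t - a) (b - t) with h | h
  · exact ⟨a, haS, by rw [abs_sub_comm, abs_of_nonneg (sub_nonneg.2 hat)]; linarith⟩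
  · exact ⟨b, hbS, by rw [abs_of_nonneg (sub_nonneg.2 htb)]; linarith⟩

lemma exists_abs_sub_le_of_mem_Icc {S : Finset ℝ} (hS : S.Nonempty) {D t : ℝ}
    (hD : maxStep S ≤ D) (ht : t ∈ Set.Icc (S.min' hS - D / 2) (S.max' hS + D / 2)) :
    ∃ s ∈ S, |s - t| ≤ D / 2 := by
  rcases lt_or_ge t (S.min' hS) with hlo | hlo
  · exact ⟨S.min' hS, S.min'_mem hS, by rw [abs_of_pos (sub_pos.2 hlo)]; linarith [ht.1]⟩
  rcases lt_or_ge (S.max' hS) t with hhi | hhi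
  · exact ⟨S.max' hS, S.max'_mem hS, by rw [abs_of_neg (sub_neg.2 hhi)]; linarith [ht.2]⟩
  obtain ⟨s, hs, hst⟩ := exists_abs_sub_le_half_maxStep hS ⟨hlo, hhi⟩
  exact ⟨s, hs, hst.trans (by linarith)⟩

lemma abs_nearest_sub_le_of_abs_le {S : Finset ℝ} (hS : S.Nonempty) {D P e p : ℝ}
    (hD : maxStep S ≤ D) (hP : P ∈ Set.Icc (S.min' hS) (S.max' hS)) (he : |e| ≤ D / 2)
    (hp : ∀ s ∈ S, |p - (P - e)| ≤ |s - (P - e)|) : |p - (P - e)| ≤ D / 2 := by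
  obtain ⟨he_lo, he_hi⟩ := abs_le.1 he
  obtain ⟨s, hs, hst⟩ := exists_abs_sub_le_of_mem_Icc hS hD (t := P - e)
    ⟨by linarith [hP.1], by linarith [hP.2]⟩
  exact (hp s hs).trans hst

theorem stmt6_general (n : ℕ) (S : Fin n → Finset ℝ) (hS : ∀ i, (S i).Nonempty)
    (idx : ℕ → Fin n) (Preq Pimp e : ℕ → ℝ)
    (hreq : ∀ k : ℕ, 1 ≤ k →
      Preq k ∈ Set.Icc ((S (idx k)).min' (hS _)) ((S (idx k)).max' (hS _)))
    (he0 : e 0 = 0)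
    (hproj : ∀ k : ℕ, 1 ≤ k → ∀ s ∈ S (idx k),
      |Pimp k - (Preq k - e (k - 1))| ≤ |s - (Preq k - e (k - 1))|)
    (he : ∀ k : ℕ, 1 ≤ k → e k = e (k - 1) + Pimp k - Preq k) :
    ∀ k : ℕ, 1 ≤ k → |e k| ≤ maxStepColl S / 2 := by
  have hD := maxStep_le_maxStepColl S
  suffices ∀ k, |e k| ≤ maxStepColl S / 2 from fun k _ => this k
  intro k
  induction k with
  | zero => rw [he0, abs_zero]; linarith [maxStep_nonneg (S (idx 0)), hD (idx 0)]
  | succ k ih =>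
    have hk : 1 ≤ k + 1 := Nat.le_add_left 1 k
    have he_succ : e (k + 1) = Pimp (k + 1) - (Preq (k + 1) - e k) := by
      rw [he (k + 1) hk, Nat.add_sub_cancel]; ring
    rw [he_succ]
    exact abs_nearest_sub_le_of_abs_le (hS _) (hD _) (hreq _ hk) ih (hproj _ hk)

/-- Error diffusion over a finite collection of finite sets: if every request
`P_req_k` lies in `conv(S_{i_k}) = [min S_{i_k}, max S_{i_k}]` and the implemented setpoint
is `P_imp_k = proj_{S_{i_k}}(P_req_k − e_{k−1})` with `e_k = e_{k−1} + P_imp_k − P_req_k`,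
`e_0 = 0`, then `|e_k| ≤ Δ_𝕊 / 2` for all `k ≥ 1`. -/
theorem stmt6 (n : ℕ) (hn : 1 ≤ n) (S : Fin n → Finset ℝ) (hS : ∀ i, (S i).Nonempty)
    (idx : ℕ → Fin n) (Preq Pimp e : ℕ → ℝ)
    (hreq : ∀ k : ℕ, 1 ≤ k →
      Preq k ∈ Set.Icc ((S (idx k)).min' (hS _)) ((S (idx k)).max' (hS _)))
    (he0 : e 0 = 0)
    (hmem : ∀ k : ℕ, 1 ≤ k → Pimp k ∈ S (idx k))
    (hproj : ∀ k : ℕ, 1 ≤ k → ∀ s ∈ S (idx k),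
      |Pimp k - (Preq k - e (k - 1))| ≤ |s - (Preq k - e (k - 1))|)
    (he : ∀ k : ℕ, 1 ≤ k → e k = e (k - 1) + Pimp k - Preq k) :
    ∀ k : ℕ, 1 ≤ k → |e k| ≤ maxStepColl S / 2 :=
  stmt6_general n S hS idx Preq Pimp e hreq he0 hproj he
end

section
/- Let n ≥ 1 and let 𝕊 = {S_1, …, S_n} be a uniform collection of finite subsets of ℝ with common stepsize Δ_𝕊 > 0 (each S_i has at least two elements and all consecutive gaps in each S_i equal Δ_𝕊). Let (i_k)_{k≥1} be any sequence with i_k ∈ {1, …, n}, let P_req_k ∈ [min S_{i_k}, max S_{i_k}] for every k, define e_0 := 0, and let P_imp_k be a tie-breaking projection of P_req_k − e_{k−1} onto S_{i_k} toward P_req_k, i.e., P_imp_k ∈ S_{i_k}, |P_imp_k − (P_req_k − e_{k−1})| = min_{s∈S_{i_k}} |s − (P_req_k − e_{k−1})|, and |P_imp_k − P_req_k| ≤ |ρ − P_req_k| for every ρ ∈ S_{i_k} attaining this minimum; set e_k := e_{k−1} + P_imp_k − P_req_k. Then |e_k| ≤ Δ_𝕊/2 for all k ≥ 1, and the strict instantaneous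 bound |P_imp_k − P_req_k| < Δ_𝕊 holds for every k ≥ 1. -/
/-!
The new error `e_k = P_imp_k - (P_req_k - e_{k-1})` is the residual of projecting the target
`P_req_k - e_{k-1}` onto a grid of mesh `Δ`. If `|e_{k-1}| ≤ Δ/2`, the target lies within `Δ/2` of
`[min S, max S]`, so some grid point, and hence the projection, is within `Δ/2` of it: by
induction `|e_k| ≤ Δ/2`. Then `|P_imp_k - P_req_k| = |e_k - e_{k-1}| ≤ Δ`, with equality only if
`e_k = -e_{k-1} = ±Δ/2`. In that case `P_req_k` is itself a grid point at the same distance `Δ/2`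
from the target, so the tie-break forces `P_imp_k = P_req_k`, a contradiction.
-/

/-- A finite set `S ⊂ ℝ` is uniform with stepsize `Δ` if it has at least two elements and
every gap between consecutive elements equals `Δ`. -/
def IsUniform (S : Finset ℝ) (Δ : ℝ) : Prop :=
  2 ≤ S.card ∧ ∀ a ∈ S, ∀ b ∈ S, a < b → (∀ c ∈ S, c ≤ a ∨ b ≤ c) → b - a = Δ

namespace IsUniform

variable {S : Finset ℝ} {Δ : ℝ}

theorem min'_filter_gt_eq_add (hu : IsUniform S Δ) {a : ℝ} (ha : a ∈ S)
    (hT : (S.filter (a < ·)).Nonempty) : (S.filter (a < ·)).min' hT = a + Δ := by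
  obtain ⟨hcS, hac⟩ := Finset.mem_filter.1 ((S.filter (a < ·)).min'_mem hT)
  have hnext : ∀ c ∈ S, c ≤ a ∨ (S.filter (a < ·)).min' hT ≤ c := fun c hc =>
    (le_or_gt c a).imp_right fun h => Finset.min'_le _ c (Finset.mem_filter.2 ⟨hc, h⟩)
  linarith [hu.2 a ha _ hcS hac hnext]

theorem max'_filter_lt_eq_sub (hu : IsUniform S Δ) {a : ℝ} (ha : a ∈ S)
    (hT : (S.filter (· < a)).Nonempty) : (S.filter (· < a)).max' hT = a - Δ := by
  obtain ⟨hcS, hca⟩ := Finset.mem_filter.1 ((S.filter (· < a)).max'_mem hT)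
  have hprev : ∀ c ∈ S, c ≤ (S.filter (· < a)).max' hT ∨ a ≤ c := fun c hc =>
    (lt_or_ge c a).imp_left fun h => Finset.le_max' _ c (Finset.mem_filter.2 ⟨hc, h⟩)
  linarith [hu.2 _ hcS a ha hca hprev]

theorem add_mem (hu : IsUniform S Δ) {a b : ℝ} (ha : a ∈ S) (hb : b ∈ S) (hab : a < b) :
    a + Δ ∈ S := by
  have hT : (S.filter (a < ·)).Nonempty := ⟨b, Finset.mem_filter.2 ⟨hb, hab⟩⟩
  rw [← hu.min'_filter_gt_eq_add ha hT]
  exact (Finset.mem_filter.1 (Finset.min'_mem _ hT)).1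

theorem sub_mem (hu : IsUniform S Δ) {a b : ℝ} (ha : a ∈ S) (hb : b ∈ S) (hba : b < a) :
    a - Δ ∈ S := by
  have hT : (S.filter (· < a)).Nonempty := ⟨b, Finset.mem_filter.2 ⟨hb, hba⟩⟩
  rw [← hu.max'_filter_lt_eq_sub ha hT]
  exact (Finset.mem_filter.1 (Finset.max'_mem _ hT)).1

theorem pos (hu : IsUniform S Δ) : 0 < Δ := by
  have hS : S.Nonempty := Finset.card_pos.1 (by linarith [hu.1])
  obtain ⟨b, hb, hba⟩ := S.exists_mem_ne hu.1 (S.min' hS)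
  have hab : S.min' hS < b := lt_of_le_of_ne (S.min'_le b hb) hba.symm
  have hT : (S.filter (S.min' hS < ·)).Nonempty := ⟨b, Finset.mem_filter.2 ⟨hb, hab⟩⟩
  have hlt := (Finset.mem_filter.1 (Finset.min'_mem _ hT)).2
  linarith [hu.min'_filter_gt_eq_add (S.min'_mem hS) hT]

theorem exists_abs_sub_le_half (hu : IsUniform S Δ) (hS : S.Nonempty) {x : ℝ}
    (hx : x ∈ Set.Icc (S.min' hS - Δ / 2) (S.max' hS + Δ / 2)) : ∃ p ∈ S, |p - x| ≤ Δ / 2 := by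
  obtain ⟨hlo, hhi⟩ := hx
  rcases le_or_gt x (S.min' hS) with hmin | hmin
  · exact ⟨_, S.min'_mem hS, by rw [abs_of_nonneg (by linarith)]; linarith⟩
  rcases le_or_gt (S.max' hS) x with hmax | hmax
  · exact ⟨_, S.max'_mem hS, by rw [abs_of_nonpos (by linarith)]; linarith⟩
  set T := S.filter (· ≤ x)
  have hT : T.Nonempty := ⟨_, Finset.mem_filter.2 ⟨S.min'_mem hS, hmin.le⟩⟩
  obtain ⟨haS, hax⟩ := Finset.mem_filter.1 (T.max'_mem hT)
  set a := T.max' hT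
  rcases le_or_gt (x - a) (Δ / 2) with hnear | hfar
  · exact ⟨a, haS, by rw [abs_of_nonpos (by linarith)]; linarith⟩
  have hsucc : a + Δ ∈ S := hu.add_mem haS (S.max'_mem hS) (hax.trans_lt hmax)
  have hxsucc : x < a + Δ := lt_of_not_ge fun h =>
    (T.le_max' _ (Finset.mem_filter.2 ⟨hsucc, h⟩)).not_gt (by linarith [hu.pos])
  exact ⟨a + Δ, hsucc, by rw [abs_of_nonneg (by linarith)]; linarith⟩

theorem mem_of_abs_sub_eq (hu : IsUniform S Δ) (hS : S.Nonempty) {p y : ℝ}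
    (hp : p ∈ S) (hy : y ∈ Set.Icc (S.min' hS) (S.max' hS)) (hpy : |p - y| = Δ) : y ∈ S := by
  have hΔ := hu.pos
  rcases (abs_eq hΔ.le).1 hpy with h | h
  · rw [show y = p - Δ by linarith]
    exact hu.sub_mem hp (S.min'_mem hS) (by linarith [hy.1])
  · rw [show y = p + Δ by linarith]
    exact hu.add_mem hp (S.max'_mem hS) (by linarith [hy.2])

/-- One step of error diffusion: `p` is a projection of the corrected request `y - e`. -/
theorem abs_add_sub_le_half (hu : IsUniform S Δ) (hS : S.Nonempty) {y e p : ℝ}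
    (hy : y ∈ Set.Icc (S.min' hS) (S.max' hS)) (he : |e| ≤ Δ / 2)
    (hp : ∀ s ∈ S, |p - (y - e)| ≤ |s - (y - e)|) : |e + p - y| ≤ Δ / 2 := by
  obtain ⟨q, hq, hqx⟩ := hu.exists_abs_sub_le_half hS (x := y - e)
    ⟨by linarith [hy.1, (abs_le.1 he).2], by linarith [hy.2, (abs_le.1 he).1]⟩
  calc |e + p - y| = |p - (y - e)| := by ring_nf
    _ ≤ |q - (y - e)| := hp q hq
    _ ≤ Δ / 2 := hqx

theorem abs_sub_lt (hu : IsUniform S Δ) (hS : S.Nonempty) {y e p : ℝ}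
    (hy : y ∈ Set.Icc (S.min' hS) (S.max' hS)) (he : |e| ≤ Δ / 2) (hpS : p ∈ S)
    (hp : ∀ s ∈ S, |p - (y - e)| ≤ |s - (y - e)|)
    (htie : ∀ ρ ∈ S, (∀ s ∈ S, |ρ - (y - e)| ≤ |s - (y - e)|) → |p - y| ≤ |ρ - y|) :
    |p - y| < Δ := by
  by_contra! hge
  have hnew := hu.abs_add_sub_le_half hS hy he hp
  have hsplit : |p - y| ≤ |e + p - y| + |e| := by
    simpa only [add_sub_cancel_left, add_sub_assoc] using abs_sub (e + (p - y)) e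
  have hpy : |p - y| = Δ := by linarith
  -- equality forces `|e| = |e + p - y| = Δ / 2`: the request `y` is as close to the target as `p`
  have hdist : |p - (y - e)| = |y - (y - e)| := by
    rw [sub_sub_cancel, show p - (y - e) = e + p - y by ring]
    linarith
  have hyS : y ∈ S := hu.mem_of_abs_sub_eq hS hpS hy hpy
  have := htie y hyS fun s hs => hdist ▸ hp s hs
  rw [sub_self, abs_zero] at this
  linarith [hu.pos]

end IsUniform

theorem stmt8_general (n : ℕ) (S : Fin n → Finset ℝ) (hS : ∀ i, (S i).Nonempty)
    (Δ : ℝ) (hunif : ∀ i, IsUniform (S i) Δ)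
    (idx : ℕ → Fin n) (Preq Pimp e : ℕ → ℝ)
    (hreq : ∀ k : ℕ, 1 ≤ k →
      Preq k ∈ Set.Icc ((S (idx k)).min' (hS _)) ((S (idx k)).max' (hS _)))
    (he0 : e 0 = 0)
    (hmem : ∀ k : ℕ, 1 ≤ k → Pimp k ∈ S (idx k))
    (hproj : ∀ k : ℕ, 1 ≤ k → ∀ s ∈ S (idx k),
      |Pimp k - (Preq k - e (k - 1))| ≤ |s - (Preq k - e (k - 1))|)
    (htie : ∀ k : ℕ, 1 ≤ k → ∀ ρ ∈ S (idx k),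
      (∀ s ∈ S (idx k), |ρ - (Preq k - e (k - 1))| ≤ |s - (Preq k - e (k - 1))|) →
      |Pimp k - Preq k| ≤ |ρ - Preq k|)
    (he : ∀ k : ℕ, 1 ≤ k → e k = e (k - 1) + Pimp k - Preq k) :
    ∀ k : ℕ, 1 ≤ k → |e k| ≤ Δ / 2 ∧ |Pimp k - Preq k| < Δ := by
  have herr : ∀ k, |e k| ≤ Δ / 2 := by
    intro k
    induction k with
    | zero => rw [he0, abs_zero]; linarith [(hunif (idx 0)).pos]
    | succ m ih =>
      rw [he (m + 1) m.succ_pos]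
      exact (hunif _).abs_add_sub_le_half (hS _) (hreq _ m.succ_pos) ih (hproj _ m.succ_pos)
  rintro (_ | m) hk
  · omega
  exact ⟨herr _, (hunif _).abs_sub_lt (hS _) (hreq _ hk) (herr m) (hmem _ hk)
    (hproj _ hk) (htie _ hk)⟩

/-- Error diffusion over a uniform collection with common stepsize `Δ_𝕊 > 0`,
with tie-breaking projection toward the request: then `|e_k| ≤ Δ_𝕊/2` and the strict
instantaneous bound `|P_imp_k − P_req_k| < Δ_𝕊` hold for all `k ≥ 1`. -/
theorem stmt8 (n : ℕ) (hn : 1 ≤ n) (S : Fin n → Finset ℝ) (hS : ∀ i, (S i).Nonempty)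
    (Δ : ℝ) (hΔ : 0 < Δ) (hunif : ∀ i, IsUniform (S i) Δ)
    (idx : ℕ → Fin n) (Preq Pimp e : ℕ → ℝ)
    (hreq : ∀ k : ℕ, 1 ≤ k →
      Preq k ∈ Set.Icc ((S (idx k)).min' (hS _)) ((S (idx k)).max' (hS _)))
    (he0 : e 0 = 0)
    (hmem : ∀ k : ℕ, 1 ≤ k → Pimp k ∈ S (idx k))
    (hproj : ∀ k : ℕ, 1 ≤ k → ∀ s ∈ S (idx k),
      |Pimp k - (Preq k - e (k - 1))| ≤ |s - (Preq k - e (k - 1))|)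
    (htie : ∀ k : ℕ, 1 ≤ k → ∀ ρ ∈ S (idx k),
      (∀ s ∈ S (idx k), |ρ - (Preq k - e (k - 1))| ≤ |s - (Preq k - e (k - 1))|) →
      |Pimp k - Preq k| ≤ |ρ - Preq k|)
    (he : ∀ k : ℕ, 1 ≤ k → e k = e (k - 1) + Pimp k - Preq k) :
    ∀ k : ℕ, 1 ≤ k → |e k| ≤ Δ / 2 ∧ |Pimp k - Preq k| < Δ :=
  stmt8_general n S hS Δ hunif idx Preq Pimp e hreq he0 hmem hproj htie he
end

section
/- Let S ⊂ ℝ be a finite set and let P_1, P_2 ∈ S with P_1 < P_2 be consecutive elements of S (i.e., S ∩ (P_1, P_2) = ∅), and write Δ := P_2 − P_1. Let 0 < ε < Δ and consider the constant request sequence P_req_k := P_1 + ε. Then for every sequence (P_imp_k)_{k≥1} with values in S for which there exists c ≥ 0 with |∑_{i=1}^{k} (P_imp_i − P_req_i)| ≤ c for all k ≥ 1 (i.e., any algorithm achieving bounded accumulated error), there exists an index k₀ with P_imp_{k₀} ≥ P_2, and hence |P_imp_{k₀} − P_req_{k₀}| ≥ Δ − ε. In particular, no algorithm with bounded accumulated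 error can guarantee an instantaneous error strictly smaller than Δ − ε for every ε > 0; the bound |P_imp_k − P_req_k| < Δ is best possible. -/
open Finset

/- A sequence whose accumulated error against the constant request `a` stays bounded cannot
stay below any `b < a`: otherwise each step adds at least `a - b` to the deficit. Since `S`
has no element strictly between `P1` and `P2`, exceeding `P1` means reaching `P2`. -/

theorem exists_lt_of_abs_sum_Icc_sub_le {f : ℕ → ℝ} {a b c : ℝ} (hba : b < a)
    (hbdd : ∀ k : ℕ, 1 ≤ k → |∑ i ∈ Icc 1 k, (f i - a)| ≤ c) :
    ∃ k : ℕ, 1 ≤ k ∧ b < f k := by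
  by_contra! hle
  obtain ⟨k, hk⟩ := exists_nat_gt (c / (a - b))
  have hdeficit : ∑ i ∈ Icc 1 (k + 1), (f i - a) ≤ (k + 1 : ℕ) * (b - a) := by
    calc ∑ i ∈ Icc 1 (k + 1), (f i - a) ≤ ∑ _i ∈ Icc 1 (k + 1), (b - a) :=
          sum_le_sum fun i hi => by linarith [hle i (mem_Icc.mp hi).1]
      _ = (k + 1 : ℕ) * (b - a) := by
        rw [sum_const, Nat.card_Icc, Nat.add_sub_cancel, nsmul_eq_mul]
  have hck : c < (k + 1 : ℕ) * (a - b) := by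
    rw [div_lt_iff₀ (sub_pos.mpr hba)] at hk
    push_cast
    nlinarith
  have := neg_le_of_abs_le (hbdd (k + 1) (Nat.le_add_left 1 k))
  linarith

theorem stmt9_general (S : Finset ℝ) (P1 P2 : ℝ)
    (hconsec : ∀ s ∈ S, s ≤ P1 ∨ P2 ≤ s)
    (ε : ℝ) (hε0 : 0 < ε)
    (Pimp : ℕ → ℝ) (hmem : ∀ k : ℕ, 1 ≤ k → Pimp k ∈ S)
    (c : ℝ)
    (hbdd : ∀ k : ℕ, 1 ≤ k → |∑ i ∈ Finset.Icc 1 k, (Pimp i - (P1 + ε))| ≤ c) :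
    ∃ k₀ : ℕ, 1 ≤ k₀ ∧ P2 ≤ Pimp k₀ ∧ (P2 - P1) - ε ≤ |Pimp k₀ - (P1 + ε)| := by
  obtain ⟨k, hk, hP1k⟩ := exists_lt_of_abs_sum_Icc_sub_le (lt_add_of_pos_right P1 hε0) hbdd
  have hP2k : P2 ≤ Pimp k := (hconsec _ (hmem k hk)).resolve_left hP1k.not_ge
  exact ⟨k, hk, hP2k, by linarith [le_abs_self (Pimp k - (P1 + ε))]⟩

/-- Optimality of the instantaneous bound. Let `P_1 < P_2` be consecutive
elements of a finite set `S ⊂ ℝ` with gap `Δ = P_2 − P_1`, let `0 < ε < Δ`, and consider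
the constant request `P_req_k = P_1 + ε`. Any `S`-valued sequence of implemented setpoints
with bounded accumulated error must satisfy `P_imp_{k₀} ≥ P_2` for some `k₀ ≥ 1`, hence
`|P_imp_{k₀} − P_req_{k₀}| ≥ Δ − ε`. -/
theorem stmt9 (S : Finset ℝ) (P1 P2 : ℝ) (hP1 : P1 ∈ S) (hP2 : P2 ∈ S) (hlt : P1 < P2)
    (hconsec : ∀ s ∈ S, s ≤ P1 ∨ P2 ≤ s)
    (ε : ℝ) (hε0 : 0 < ε) (hεΔ : ε < P2 - P1)
    (Pimp : ℕ → ℝ) (hmem : ∀ k : ℕ, 1 ≤ k → Pimp k ∈ S)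
    (c : ℝ) (hc : 0 ≤ c)
    (hbdd : ∀ k : ℕ, 1 ≤ k → |∑ i ∈ Finset.Icc 1 k, (Pimp i - (P1 + ε))| ≤ c) :
    ∃ k₀ : ℕ, 1 ≤ k₀ ∧ P2 ≤ Pimp k₀ ∧ (P2 - P1) - ε ≤ |Pimp k₀ - (P1 + ε)| :=
  stmt9_general S P1 P2 hconsec ε hε0 Pimp hmem c hbdd
end

section
/- Let S ⊂ ℝ be a finite uniform set with stepsize Δ > 0 (at least two elements, all consecutive gaps equal to Δ). Let x ∈ S and let e ∈ ℝ with |e| ≤ Δ/2. Let p be a tie-breaking projection of x − e onto S toward x, i.e., p ∈ S, |p − (x − e)| = min_{s∈S} |s − (x − e)|, and |p − x| ≤ |ρ − x| for every ρ ∈ S attaining this minimum. Then p = x. (Consequently, in the error-diffusion scheme with a uniform collection and tie-breaking toward the request, whenever the requested setpoint is itself implementable it is implemented exactly, regardless of the current accumulated error.) -/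
/-! Distinct points of a uniform set are at least `Δ` apart, while `x` lies within `Δ / 2` of the
target `x - e`. By the triangle inequality a nearest point `p ≠ x` would be no closer to the
target than `x`, so `x` is itself a nearest point and the tie-break toward `x` forces `p = x`. -/

namespace IsUniform

variable {S : Finset ℝ} {Δ : ℝ}

theorem le_sub_of_lt (h : IsUniform S Δ) {a b : ℝ} (ha : a ∈ S) (hb : b ∈ S) (hab : a < b) :
    Δ ≤ b - a := by
  classical
  have hne : (S.filter (a < ·)).Nonempty := ⟨b, Finset.mem_filter.mpr ⟨hb, hab⟩⟩
  set c := (S.filter (a < ·)).min' hne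
  obtain ⟨hcS, hac⟩ := Finset.mem_filter.mp ((S.filter (a < ·)).min'_mem hne)
  have hcb : c ≤ b := Finset.min'_le _ b (Finset.mem_filter.mpr ⟨hb, hab⟩)
  have hgap : c - a = Δ := h.2 a ha c hcS hac fun d hd =>
    (le_or_gt d a).imp_right fun hda => Finset.min'_le _ d (Finset.mem_filter.mpr ⟨hd, hda⟩)
  linarith

theorem pairwise_le_dist (h : IsUniform S Δ) : (S : Set ℝ).Pairwise (Δ ≤ dist · ·) := by
  intro a ha b hb hab
  rw [Real.dist_eq]
  rcases hab.lt_or_gt with hlt | hgt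
  · rw [abs_sub_comm]
    exact (h.le_sub_of_lt ha hb hlt).trans (le_abs_self _)
  · exact (h.le_sub_of_lt hb ha hgt).trans (le_abs_self _)

end IsUniform

theorem eq_of_isNearest_of_dist_le_half {X : Type*} [MetricSpace X] {S : Set X} {Δ : ℝ}
    (hsep : S.Pairwise (Δ ≤ dist · ·)) {x y p : X} (hx : x ∈ S)
    (hxy : dist x y ≤ Δ / 2) (hp : p ∈ S) (hmin : ∀ s ∈ S, dist p y ≤ dist s y)
    (htie : ∀ ρ ∈ S, (∀ s ∈ S, dist ρ y ≤ dist s y) → dist p x ≤ dist ρ x) :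
    p = x := by
  have hx_le_p : dist x y ≤ dist p y := by
    rcases eq_or_ne p x with rfl | hne
    · exact le_rfl
    · linarith [hsep hp hx hne, dist_triangle_right p x y]
  have hx_nearest : ∀ s ∈ S, dist x y ≤ dist s y := fun s hs => hx_le_p.trans (hmin s hs)
  simpa using htie x hx hx_nearest

theorem stmt10_general (S : Finset ℝ) (Δ : ℝ) (hunif : IsUniform S Δ)
    (x : ℝ) (hx : x ∈ S) (e : ℝ) (he : |e| ≤ Δ / 2)
    (p : ℝ) (hp : p ∈ S)
    (hmin : ∀ s ∈ S, |p - (x - e)| ≤ |s - (x - e)|)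
    (htie : ∀ ρ ∈ S, (∀ s ∈ S, |ρ - (x - e)| ≤ |s - (x - e)|) → |p - x| ≤ |ρ - x|) :
    p = x := by
  simp only [← Real.dist_eq] at hmin htie
  refine eq_of_isNearest_of_dist_le_half hunif.pairwise_le_dist hx ?_ hp hmin htie
  rwa [Real.dist_eq, sub_sub_cancel]

/-- For a uniform set `S` with stepsize `Δ > 0`, if `x ∈ S`, `|e| ≤ Δ/2`,
and `p` is a tie-breaking projection of `x − e` onto `S` toward `x`, then `p = x`:
an implementable request is implemented exactly, regardless of the accumulated error. -/
theorem stmt10 (S : Finset ℝ) (Δ : ℝ) (hΔ : 0 < Δ) (hunif : IsUniform S Δ)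
    (x : ℝ) (hx : x ∈ S) (e : ℝ) (he : |e| ≤ Δ / 2)
    (p : ℝ) (hp : p ∈ S)
    (hmin : ∀ s ∈ S, |p - (x - e)| ≤ |s - (x - e)|)
    (htie : ∀ ρ ∈ S, (∀ s ∈ S, |ρ - (x - e)| ≤ |s - (x - e)|) → |p - x| ≤ |ρ - x|) :
    p = x :=
  stmt10_general S Δ hunif x hx e he p hp hmin htie
end

section
/- Let D ⊆ ℝ² be a convex compact set and let (I_k)_{k≥0} be a sequence of nonempty closed convex sets such that each I_k is a projection-translation invariant subset of D. Let (u_req_k)_{k≥1} be a sequence of requests with u_req_k ∈ I_{k−1} for every k ≥ 1 (persistent-predictor advertisement A_k = I_{k−1}). Define e_0 := 0 and recursively u_imp_k := proj_{I_k}(u_req_k − e_{k−1}) and e_k := e_{k−1} + u_imp_k − u_req_k, where proj_{I_k} is the nearest-point projection onto I_k. Then ‖e_k‖ ≤ diam D for all k ≥ 1, where diam D := max{‖v − w‖ : v, w ∈ D}. Moreover, u_req_k − e_{k−1} ∈ D for all k ≥ 1. -/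
/-!
Write `x_k = u_req_k - e_{k-1}` for the corrected request handed to the projection. The
recursion gives `e_k = proj_{I_k}(x_k) - x_k`, hence `x_{k+1} = u_req_{k+1} + x_k - proj_{I_k}(x_k)`
with `u_req_{k+1} ∈ I_k`, so projection-translation invariance keeps every `x_k` in `D`. Then
`e_k` is the difference of the two points `proj_{I_k}(x_k) ∈ I_k ⊆ D` and `x_k ∈ D`.
-/

section ErrorDiffusion

variable {E : Type*} [AddCommGroup E]

def IsProjTranslationInvariant (D I : Set E) (p : E → E) : Prop :=
  ∀ v ∈ D, ∀ u ∈ I, u + v - p v ∈ D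

theorem errorDiffusion_sub_mem {D : Set E} {I : ℕ → Set E} {p : ℕ → E → E} {u e : ℕ → E}
    (hPTI : ∀ k, IsProjTranslationInvariant D (I k) (p k)) (hsub : I 0 ⊆ D)
    (hu : ∀ n, u (n + 1) ∈ I n) (he0 : e 0 = 0)
    (he : ∀ n, e (n + 1) = p (n + 1) (u (n + 1) - e n) - (u (n + 1) - e n)) :
    ∀ n, u (n + 1) - e n ∈ D := by
  intro n
  induction n with
  | zero => simpa [he0] using hsub (hu 0)
  | succ n ih =>
    have hstep : u (n + 2) - e (n + 1)
        = u (n + 2) + (u (n + 1) - e n) - p (n + 1) (u (n + 1) - e n) := by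
      rw [he n]; abel
    exact hstep ▸ hPTI (n + 1) _ ih _ (hu (n + 1))

end ErrorDiffusion

theorem stmt12_general (D : Set (EuclideanSpace ℝ (Fin 2)))
    (hDcomp : IsCompact D)
    (I : ℕ → Set (EuclideanSpace ℝ (Fin 2)))
    (proj : ℕ → EuclideanSpace ℝ (Fin 2) → EuclideanSpace ℝ (Fin 2))
    (hprojmem : ∀ k v, proj k v ∈ I k)
    (hsub : ∀ k, I k ⊆ D)
    (hPTI : ∀ k, ∀ v ∈ D, ∀ u ∈ I k, u + v - proj k v ∈ D)
    (u_req u_imp e : ℕ → EuclideanSpace ℝ (Fin 2))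
    (hreq : ∀ k : ℕ, 1 ≤ k → u_req k ∈ I (k - 1))
    (he0 : e 0 = 0)
    (himp : ∀ k : ℕ, 1 ≤ k → u_imp k = proj k (u_req k - e (k - 1)))
    (he : ∀ k : ℕ, 1 ≤ k → e k = e (k - 1) + u_imp k - u_req k) :
    ∀ k : ℕ, 1 ≤ k → ‖e k‖ ≤ Metric.diam D ∧ u_req k - e (k - 1) ∈ D := by
  have hrec : ∀ n, e (n + 1) = proj (n + 1) (u_req (n + 1) - e n) - (u_req (n + 1) - e n) := by
    intro n
    rw [he (n + 1) n.succ_pos, himp (n + 1) n.succ_pos, Nat.add_sub_cancel]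
    abel
  have hmem := errorDiffusion_sub_mem hPTI (hsub 0)
    (fun n => by simpa using hreq (n + 1) n.succ_pos) he0 hrec
  rintro (_ | n) hk
  · exact absurd hk (by decide)
  refine ⟨?_, hmem n⟩
  rw [hrec, ← dist_eq_norm]
  exact Metric.dist_le_diam_of_mem hDcomp.isBounded (hsub _ (hprojmem _ _)) (hmem n)

/-- Error diffusion for uncertain resources with the persistent-predictor
advertisement. If each nonempty closed convex set `I_k` is a projection-translation
invariant subset of the convex compact set `D ⊆ ℝ²`, requests satisfy `u_req_k ∈ I_{k−1}`,
and the agent implements `u_imp_k = proj_{I_k}(u_req_k − e_{k−1})` with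
`e_k = e_{k−1} + u_imp_k − u_req_k`, `e_0 = 0`, then for every `k ≥ 1` we have
`‖e_k‖ ≤ diam D` and moreover `u_req_k − e_{k−1} ∈ D`. -/
theorem stmt12 (D : Set (EuclideanSpace ℝ (Fin 2))) (hDconv : Convex ℝ D)
    (hDcomp : IsCompact D)
    (I : ℕ → Set (EuclideanSpace ℝ (Fin 2)))
    (hne : ∀ k, (I k).Nonempty) (hclosed : ∀ k, IsClosed (I k))
    (hconv : ∀ k, Convex ℝ (I k))
    (proj : ℕ → EuclideanSpace ℝ (Fin 2) → EuclideanSpace ℝ (Fin 2))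
    (hprojmem : ∀ k v, proj k v ∈ I k)
    (hprojmin : ∀ k v, ∀ w ∈ I k, ‖v - proj k v‖ ≤ ‖v - w‖)
    (hsub : ∀ k, I k ⊆ D)
    (hPTI : ∀ k, ∀ v ∈ D, ∀ u ∈ I k, u + v - proj k v ∈ D)
    (u_req u_imp e : ℕ → EuclideanSpace ℝ (Fin 2))
    (hreq : ∀ k : ℕ, 1 ≤ k → u_req k ∈ I (k - 1))
    (he0 : e 0 = 0)
    (himp : ∀ k : ℕ, 1 ≤ k → u_imp k = proj k (u_req k - e (k - 1)))
    (he : ∀ k : ℕ, 1 ≤ k → e k = e (k - 1) + u_imp k - u_req k) :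
    ∀ k : ℕ, 1 ≤ k → ‖e k‖ ≤ Metric.diam D ∧ u_req k - e (k - 1) ∈ D :=
  stmt12_general D hDcomp I proj hprojmem hsub hPTI u_req u_imp e hreq he0 himp he
end

section
/- Let (I_k)_{k≥0} be a sequence of nonempty closed bounded intervals in ℝ whose union is bounded, and let D := conv(closure of ⋃_{k≥0} I_k), a compact interval. Let (P_req_k)_{k≥1} satisfy P_req_k ∈ I_{k−1} for every k ≥ 1 (persistent-predictor advertisement). Define e_0 := 0 and recursively P_imp_k := proj_{I_k}(P_req_k − e_{k−1}) and e_k := e_{k−1} + P_imp_k − P_req_k, where proj_{I_k} is the nearest-point projection onto the interval I_k. Then |e_k| ≤ diam D for all k ≥ 1, where diam D is the length of the interval D. -/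
/-!
Write `v_k := P_req_k − e_{k−1}` for the value the agent tries to implement at step `k`, so that
`e_k = proj_{I_k}(v_k) − v_k`. Every `v_k` lies in `D`: `v_1 = P_req_1 ∈ I_0`, and
`v_{k+1} = P_req_{k+1} + (v_k − proj_{I_k} v_k)` lies between `P_req_{k+1} ∈ I_k` and `v_k`,
because clamping `v_k` to `I_k` moves it towards `P_req_{k+1}` by at most the distance between them.
Since `D` is an interval containing `v_k` and `proj_{I_k} v_k ∈ I_k`, `|e_k| ≤ diam D`.
-/

open Set

theorem sub_max_min_add_mem_uIcc {a b p : ℝ} (hp : p ∈ Icc a b) (v : ℝ) :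
    v - max a (min b v) + p ∈ uIcc p v := by
  obtain ⟨hap, hpb⟩ := hp
  rcases le_total v b with hvb | hbv
  · rcases le_total a v with hav | hva
    · simp [min_eq_right hvb, max_eq_right hav]
    · rw [min_eq_right hvb, max_eq_left hva]
      exact mem_uIcc.2 (Or.inr ⟨by linarith, by linarith⟩)
  · rw [min_eq_left hbv, max_eq_right (hap.trans hpb)]
    exact mem_uIcc.2 (Or.inl ⟨by linarith, by linarith⟩)

theorem errorDiffusion_target_mem {D : Set ℝ} (hD : D.OrdConnected) {lo hi Preq e : ℕ → ℝ}
    (hI : ∀ k, Icc (lo k) (hi k) ⊆ D) (hreq : ∀ k, Preq (k + 1) ∈ Icc (lo k) (hi k))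
    (he0 : e 0 = 0)
    (he : ∀ k, e (k + 1) = max (lo (k + 1)) (min (hi (k + 1)) (Preq (k + 1) - e k))
      - (Preq (k + 1) - e k)) :
    ∀ n, Preq (n + 1) - e n ∈ D
  | 0 => by simpa [he0] using hI 0 (hreq 0)
  | n + 1 => by
    set v := Preq (n + 1) - e n
    have hnext : Preq (n + 2) - e (n + 1) =
        v - max (lo (n + 1)) (min (hi (n + 1)) v) + Preq (n + 2) := by
      rw [he n]; ring
    rw [hnext]
    exact hD.uIcc_subset (hI _ (hreq (n + 1))) (errorDiffusion_target_mem hD hI hreq he0 he n)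
      (sub_max_min_add_mem_uIcc (hreq (n + 1)) v)

/-- Error diffusion for an uncertain real-power-only resource whose
implementable sets are closed bounded intervals `I_k = [lo_k, hi_k]` with bounded union,
with persistent-predictor advertisement (`P_req_k ∈ I_{k−1}`) and projection
`proj_{I_k}(v) = max lo_k (min hi_k v)`: the accumulated error satisfies
`|e_k| ≤ diam D` for all `k ≥ 1`, where `D = conv(⋃_k I_k)`. -/
theorem stmt13 (lo hi : ℕ → ℝ) (hle : ∀ k, lo k ≤ hi k)
    (m M : ℝ) (hbddlo : ∀ k, m ≤ lo k) (hbddhi : ∀ k, hi k ≤ M)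
    (Preq : ℕ → ℝ)
    (hreq : ∀ k : ℕ, 1 ≤ k → Preq k ∈ Set.Icc (lo (k - 1)) (hi (k - 1)))
    (e Pimp : ℕ → ℝ) (he0 : e 0 = 0)
    (himp : ∀ k : ℕ, 1 ≤ k → Pimp k = max (lo k) (min (hi k) (Preq k - e (k - 1))))
    (he : ∀ k : ℕ, 1 ≤ k → e k = e (k - 1) + Pimp k - Preq k) :
    ∀ k : ℕ, 1 ≤ k →
      |e k| ≤ Metric.diam (convexHull ℝ (closure (⋃ j, Set.Icc (lo j) (hi j)))) := by
  set D := convexHull ℝ (closure (⋃ j, Set.Icc (lo j) (hi j)))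
  have hI : ∀ k, Icc (lo k) (hi k) ⊆ D := fun k =>
    (subset_iUnion (fun j => Icc (lo j) (hi j)) k).trans
      (subset_closure.trans (subset_convexHull ℝ _))
  have hDbdd : Bornology.IsBounded D := by
    refine (Metric.isBounded_Icc m M).subset (convexHull_min ?_ (convex_Icc m M))
    exact closure_minimal (iUnion_subset fun j => Icc_subset_Icc (hbddlo j) (hbddhi j)) isClosed_Icc
  have he' : ∀ k, e (k + 1) = max (lo (k + 1)) (min (hi (k + 1)) (Preq (k + 1) - e k))
      - (Preq (k + 1) - e k) := fun k => by
    rw [he (k + 1) k.succ_pos, himp (k + 1) k.succ_pos, Nat.add_sub_cancel]; ring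
  have hmem := errorDiffusion_target_mem (convex_convexHull ℝ _).ordConnected hI
    (fun k => hreq (k + 1) k.succ_pos) he0 he'
  rintro (_ | n) hk
  · omega
  · rw [he' n, ← Real.dist_eq]
    exact Metric.dist_le_diam_of_mem hDbdd (hI _ (projIcc _ _ (hle (n + 1)) _).2) (hmem n)
end

section
/- Let P_max ≥ 0 and 0 ≤ φ < π/2, and for x ∈ [0, P_max] define the triangle T(x) := {(P, Q) ∈ ℝ² : 0 ≤ P ≤ x and |Q| ≤ P·tan φ}. Then for every x ∈ [0, P_max], T(x) is a projection-translation invariant subset of D := T(P_max): for every v ∈ T(P_max) and every u ∈ T(x), u + v − proj_{T(x)}(v) ∈ T(P_max), where proj_{T(x)} is the (unique) nearest-point projection onto the closed convex set T(x). -/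
/-!
Write `T x = triangle t x` with slope `t = tan φ`. If `v ∈ T x`, the projection fixes `v` and
`u ∈ T x ⊆ T Pmax`. Otherwise `x < v 0`; then `T x` lies in the box `(-∞, x] × [-t x, t x]`, whose
nearest point to `v` is `q = (x, clamp (v 1))`, and since `q ∈ T x` it is the projection onto
`T x` as well. Finally `u + v - q = u + (v - q)`, where `v - q` has first coordinate `v 0 - x` and,
because `|v 1| ≤ t v 0`, second coordinate of size at most `t (v 0 - x)`: so `v - q` lies in the
cone `|Q| ≤ t P`, and adding it to `u` keeps the first coordinate below `x + (Pmax - x)`.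
-/

open scoped RealInnerProductSpace

theorem eq_of_norm_sub_le_of_inner_sub_nonpos {E : Type*} [NormedAddCommGroup E]
    [InnerProductSpace ℝ E] {v p q : E} (hp : ‖v - p‖ ≤ ‖v - q‖) (hq : ⟪v - q, p - q⟫ ≤ 0) :
    p = q := by
  have hexpand : ‖v - p‖ ^ 2 = ‖v - q‖ ^ 2 - 2 * ⟪v - q, p - q⟫ + ‖p - q‖ ^ 2 := by
    rw [show v - p = (v - q) - (p - q) by abel, norm_sub_sq_real]
  have hsq : ‖v - p‖ ^ 2 ≤ ‖v - q‖ ^ 2 := pow_le_pow_left₀ (norm_nonneg _) hp 2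
  have : ‖p - q‖ = 0 := by nlinarith [norm_nonneg (p - q)]
  exact sub_eq_zero.mp (norm_eq_zero.mp this)

section Clamp

variable {r y : ℝ}

theorem abs_max_neg_min_le (hr : 0 ≤ r) : |max (-r) (min r y)| ≤ r :=
  abs_le.mpr ⟨le_max_left _ _, max_le (by linarith) (min_le_left _ _)⟩

theorem max_neg_min_cases (hr : 0 ≤ r) :
    max (-r) (min r y) = y ∨ (max (-r) (min r y) = r ∧ r ≤ y) ∨
      (max (-r) (min r y) = -r ∧ y ≤ -r) := by
  rcases le_total y r with hyr | hyr
  · rcases le_total (-r) y with hry | hry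
    · exact .inl (by rw [min_eq_right hyr, max_eq_right hry])
    · exact .inr (.inr ⟨by rw [min_eq_right hyr, max_eq_left hry], hry⟩)
  · exact .inr (.inl ⟨by rw [min_eq_left hyr, max_eq_right (by linarith)], hyr⟩)

theorem sub_max_neg_min_mul_sub_nonpos {w : ℝ} (hw : |w| ≤ r) :
    (y - max (-r) (min r y)) * (w - max (-r) (min r y)) ≤ 0 := by
  obtain ⟨hw₁, hw₂⟩ := abs_le.mp hw
  rcases max_neg_min_cases (y := y) ((abs_nonneg w).trans hw) with h | ⟨h, hy⟩ | ⟨h, hy⟩ <;>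
    rw [h] <;> nlinarith

theorem abs_sub_max_neg_min_le {s : ℝ} (hs : 0 ≤ s) (hr : 0 ≤ r) (hy : |y| ≤ r + s) :
    |y - max (-r) (min r y)| ≤ s := by
  obtain ⟨hy₁, hy₂⟩ := abs_le.mp hy
  rcases max_neg_min_cases (y := y) hr with h | ⟨h, hy⟩ | ⟨h, hy⟩ <;>
    rw [h, abs_le] <;> constructor <;> linarith

end Clamp

def triangle (t x : ℝ) : Set (EuclideanSpace ℝ (Fin 2)) :=
  {p | 0 ≤ p 0 ∧ p 0 ≤ x ∧ |p 1| ≤ p 0 * t}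

namespace triangle

variable {t x : ℝ}

theorem mono {x' : ℝ} (h : x ≤ x') : triangle t x ⊆ triangle t x' :=
  fun _ ⟨h₀, hx, h₁⟩ ↦ ⟨h₀, hx.trans h, h₁⟩

theorem abs_snd_le {p : EuclideanSpace ℝ (Fin 2)} (hp : p ∈ triangle t x) (ht : 0 ≤ t) :
    |p 1| ≤ t * x := by
  obtain ⟨-, hx, h₁⟩ := hp
  nlinarith

def edgeProj (t x : ℝ) (v : EuclideanSpace ℝ (Fin 2)) : EuclideanSpace ℝ (Fin 2) :=
  !₂[x, max (-(t * x)) (min (t * x) (v 1))]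

@[simp]
theorem edgeProj_zero (v : EuclideanSpace ℝ (Fin 2)) : edgeProj t x v 0 = x := rfl

@[simp]
theorem edgeProj_one (v : EuclideanSpace ℝ (Fin 2)) :
    edgeProj t x v 1 = max (-(t * x)) (min (t * x) (v 1)) := rfl

theorem edgeProj_mem (ht : 0 ≤ t) (hx : 0 ≤ x) (v : EuclideanSpace ℝ (Fin 2)) :
    edgeProj t x v ∈ triangle t x := by
  refine ⟨hx, le_rfl, ?_⟩
  simpa [mul_comm] using abs_max_neg_min_le (y := v 1) (mul_nonneg ht hx)

theorem inner_sub_edgeProj_nonpos (ht : 0 ≤ t) {v w : EuclideanSpace ℝ (Fin 2)}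
    (hxv : x ≤ v 0) (hw : w ∈ triangle t x) :
    ⟪v - edgeProj t x v, w - edgeProj t x v⟫ ≤ 0 := by
  have h₀ : (v 0 - x) * (w 0 - x) ≤ 0 :=
    mul_nonpos_of_nonneg_of_nonpos (sub_nonneg.mpr hxv) (sub_nonpos.mpr hw.2.1)
  have h₁ := sub_max_neg_min_mul_sub_nonpos (y := v 1) (abs_snd_le hw ht)
  simp only [PiLp.inner_apply, Fin.sum_univ_two, PiLp.sub_apply, edgeProj_zero, edgeProj_one,
    RCLike.inner_apply, conj_trivial]
  nlinarith

theorem eq_edgeProj_of_forall_norm_sub_le (ht : 0 ≤ t) (hx : 0 ≤ x)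
    {v p : EuclideanSpace ℝ (Fin 2)} (hxv : x ≤ v 0) (hp : p ∈ triangle t x)
    (hmin : ∀ w ∈ triangle t x, ‖v - p‖ ≤ ‖v - w‖) : p = edgeProj t x v :=
  eq_of_norm_sub_le_of_inner_sub_nonpos (hmin _ (edgeProj_mem ht hx v))
    (inner_sub_edgeProj_nonpos ht hxv hp)

theorem add_sub_edgeProj_mem {x' : ℝ} (ht : 0 ≤ t) {u v : EuclideanSpace ℝ (Fin 2)}
    (hxv : x ≤ v 0) (hv : v ∈ triangle t x') (hu : u ∈ triangle t x) :
    u + v - edgeProj t x v ∈ triangle t x' := by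
  obtain ⟨hu₀, hux, hu₁⟩ := hu
  obtain ⟨-, hvx', hv₁⟩ := hv
  have hv₁' : |v 1| ≤ t * x + (v 0 - x) * t := by linarith
  have hclamp := abs_sub_max_neg_min_le (mul_nonneg (sub_nonneg.mpr hxv) ht)
    (mul_nonneg ht (hu₀.trans hux)) hv₁'
  simp only [triangle, Set.mem_ofPred_eq, PiLp.sub_apply, PiLp.add_apply, edgeProj_zero,
    edgeProj_one]
  refine ⟨by linarith, by linarith, ?_⟩
  calc |u 1 + v 1 - max (-(t * x)) (min (t * x) (v 1))|
      ≤ |u 1| + |v 1 - max (-(t * x)) (min (t * x) (v 1))| := by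
        rw [add_sub_assoc]; exact abs_add_le _ _
    _ ≤ (u 0 + v 0 - x) * t := by linarith

theorem add_sub_mem_of_forall_norm_sub_le {x' : ℝ} (hxx' : x ≤ x')
    {u v p : EuclideanSpace ℝ (Fin 2)} (hv : v ∈ triangle t x') (hu : u ∈ triangle t x)
    (hp : p ∈ triangle t x) (hmin : ∀ w ∈ triangle t x, ‖v - p‖ ≤ ‖v - w‖) :
    u + v - p ∈ triangle t x' := by
  by_cases hvx : v 0 ≤ x
  · obtain rfl : p = v :=
      eq_of_norm_sub_le_of_inner_sub_nonpos (hmin v ⟨hv.1, hvx, hv.2.2⟩) (by simp)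
    simpa using mono hxx' hu
  · have hx : 0 ≤ x := hu.1.trans hu.2.1
    -- `|v 1| ≤ v 0 * t` with `v 0 > 0` forces the slope to be nonnegative
    have ht : 0 ≤ t := nonneg_of_mul_nonneg_right ((abs_nonneg _).trans hv.2.2) (by linarith)
    rw [eq_edgeProj_of_forall_norm_sub_le ht hx (by linarith) hp hmin]
    exact add_sub_edgeProj_mem ht (by linarith) hv hu

end triangle

theorem stmt14_general (Pmax : ℝ) (φ : ℝ)
    (T : ℝ → Set (EuclideanSpace ℝ (Fin 2)))
    (hT : ∀ x, T x = {p : EuclideanSpace ℝ (Fin 2) |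
      0 ≤ p 0 ∧ p 0 ≤ x ∧ |p 1| ≤ p 0 * Real.tan φ})
    (proj : ℝ → EuclideanSpace ℝ (Fin 2) → EuclideanSpace ℝ (Fin 2))
    (hmem : ∀ x ∈ Set.Icc (0 : ℝ) Pmax, ∀ v, proj x v ∈ T x)
    (hmin : ∀ x ∈ Set.Icc (0 : ℝ) Pmax, ∀ v, ∀ w ∈ T x, ‖v - proj x v‖ ≤ ‖v - w‖) :
    ∀ x ∈ Set.Icc (0 : ℝ) Pmax, ∀ v ∈ T Pmax, ∀ u ∈ T x,
      u + v - proj x v ∈ T Pmax := by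
  obtain rfl : T = triangle (Real.tan φ) := funext hT
  intro x hx v hv u hu
  exact triangle.add_sub_mem_of_forall_norm_sub_le hx.2 hv hu (hmem x hx v) (hmin x hx v)

/-- For `P_max ≥ 0` and `0 ≤ φ < π/2`, every triangle
`T(x) = {(P, Q) : 0 ≤ P ≤ x, |Q| ≤ P tan φ}` with `x ∈ [0, P_max]` is a
projection-translation invariant subset of `D = T(P_max)`: for every `v ∈ T(P_max)` and
`u ∈ T(x)`, `u + v − proj_{T(x)}(v) ∈ T(P_max)`, where `proj_{T(x)}` is the nearest-point
projection onto the closed convex set `T(x)`. -/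
theorem stmt14 (Pmax : ℝ) (hP : 0 ≤ Pmax) (φ : ℝ) (hφ0 : 0 ≤ φ) (hφ : φ < Real.pi / 2)
    (T : ℝ → Set (EuclideanSpace ℝ (Fin 2)))
    (hT : ∀ x, T x = {p : EuclideanSpace ℝ (Fin 2) |
      0 ≤ p 0 ∧ p 0 ≤ x ∧ |p 1| ≤ p 0 * Real.tan φ})
    (proj : ℝ → EuclideanSpace ℝ (Fin 2) → EuclideanSpace ℝ (Fin 2))
    (hmem : ∀ x ∈ Set.Icc (0 : ℝ) Pmax, ∀ v, proj x v ∈ T x)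
    (hmin : ∀ x ∈ Set.Icc (0 : ℝ) Pmax, ∀ v, ∀ w ∈ T x, ‖v - proj x v‖ ≤ ‖v - w‖) :
    ∀ x ∈ Set.Icc (0 : ℝ) Pmax, ∀ v ∈ T Pmax, ∀ u ∈ T x,
      u + v - proj x v ∈ T Pmax :=
  stmt14_general Pmax φ T hT proj hmem hmin
end

section
/- Let G ⊆ ℝ² be a bounded nonempty closed set with 0 ∈ G and G = −G. For every k ≥ 1, let I_k ⊆ ℝ² be a bounded nonempty closed set, let A_k := conv(I_k), let D_k := A_k + G (Minkowski sum), and let F_k : D_k → I_k be a G-approximation map, i.e., F_k(x) − x ∈ G for all x ∈ D_k. Let (u_req_k)_{k≥1} satisfy u_req_k ∈ A_k for every k, define e_0 := 0, and recursively u_imp_k := F_k(u_req_k − e_{k−1}) and e_k := e_{k−1} + u_imp_k − u_req_k. Then u_req_k − e_{k−1} ∈ D_k and e_k ∈ G for all k ≥ 1 (the resource agent has G-contained accumulated error). -/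
open Pointwise

section ErrorFeedback

variable {α : Type*} [AddCommGroup α]

theorem sub_mem_add_of_neg_mem {A G : Set α} {u e : α} (hu : u ∈ A) (he : -e ∈ G) :
    u - e ∈ A + G :=
  sub_eq_add_neg u e ▸ Set.add_mem_add hu he

/-- Feeding the past error back into the request makes the new error exactly the
approximation error of the map at the corrected request. -/
theorem add_apply_sub_sub_mem {D G : Set α} {f : α → α} (happrox : ∀ x ∈ D, f x - x ∈ G)
    {u e : α} (hx : u - e ∈ D) : e + f (u - e) - u ∈ G := by
  convert happrox _ hx using 1
  abel

end ErrorFeedback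

theorem stmt17_general (G : Set (EuclideanSpace ℝ (Fin 2)))
    (hG0 : (0 : EuclideanSpace ℝ (Fin 2)) ∈ G) (hGsymm : G = -G)
    (A : ℕ → Set (EuclideanSpace ℝ (Fin 2)))
    (D : ℕ → Set (EuclideanSpace ℝ (Fin 2)))
    (hD : ∀ k : ℕ, 1 ≤ k → D k = A k + G)
    (F : ℕ → EuclideanSpace ℝ (Fin 2) → EuclideanSpace ℝ (Fin 2))
    (happrox : ∀ k : ℕ, 1 ≤ k → ∀ x ∈ D k, F k x - x ∈ G)
    (u_req u_imp e : ℕ → EuclideanSpace ℝ (Fin 2))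
    (hreq : ∀ k : ℕ, 1 ≤ k → u_req k ∈ A k)
    (he0 : e 0 = 0)
    (himp : ∀ k : ℕ, 1 ≤ k → u_imp k = F k (u_req k - e (k - 1)))
    (he : ∀ k : ℕ, 1 ≤ k → e k = e (k - 1) + u_imp k - u_req k) :
    ∀ k : ℕ, 1 ≤ k → u_req k - e (k - 1) ∈ D k ∧ e k ∈ G := by
  have hin : ∀ k, 1 ≤ k → e (k - 1) ∈ G → u_req k - e (k - 1) ∈ D k := fun k hk hprev =>
    hD k hk ▸ sub_mem_add_of_neg_mem (hreq k hk) (by rwa [hGsymm, Set.neg_mem_neg])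
  have herr : ∀ k, e k ∈ G := by
    intro k
    induction k with
    | zero => exact he0 ▸ hG0
    | succ n ih =>
      rw [he _ n.succ_pos, himp _ n.succ_pos]
      exact add_apply_sub_sub_mem (happrox _ n.succ_pos) (hin _ n.succ_pos ih)
  exact fun k hk => ⟨hin k hk (herr _), herr k⟩

/-- `G`-contained accumulated error for deterministic resources. Let
`G ⊆ ℝ²` be bounded, nonempty, closed, with `0 ∈ G` and `G = −G`. For each `k ≥ 1`, let
`I_k` be bounded nonempty closed, `A_k = conv(I_k)`, `D_k = A_k + G` (Minkowski sum), and
let `F_k : D_k → I_k` be a `G`-approximation map. If the agent implements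
`u_imp_k = F_k(u_req_k − e_{k−1})` for requests `u_req_k ∈ A_k` (with
`e_k = e_{k−1} + u_imp_k − u_req_k`, `e_0 = 0`), then `u_req_k − e_{k−1} ∈ D_k` and
`e_k ∈ G` for all `k ≥ 1`. -/
theorem stmt17 (G : Set (EuclideanSpace ℝ (Fin 2)))
    (hGne : G.Nonempty) (hGbdd : Bornology.IsBounded G) (hGcl : IsClosed G)
    (hG0 : (0 : EuclideanSpace ℝ (Fin 2)) ∈ G) (hGsymm : G = -G)
    (I : ℕ → Set (EuclideanSpace ℝ (Fin 2)))
    (hIne : ∀ k : ℕ, 1 ≤ k → (I k).Nonempty)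
    (hIbdd : ∀ k : ℕ, 1 ≤ k → Bornology.IsBounded (I k))
    (hIcl : ∀ k : ℕ, 1 ≤ k → IsClosed (I k))
    (A : ℕ → Set (EuclideanSpace ℝ (Fin 2)))
    (hA : ∀ k : ℕ, 1 ≤ k → A k = convexHull ℝ (I k))
    (D : ℕ → Set (EuclideanSpace ℝ (Fin 2)))
    (hD : ∀ k : ℕ, 1 ≤ k → D k = A k + G)
    (F : ℕ → EuclideanSpace ℝ (Fin 2) → EuclideanSpace ℝ (Fin 2))
    (hFI : ∀ k : ℕ, 1 ≤ k → ∀ x ∈ D k, F k x ∈ I k)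
    (happrox : ∀ k : ℕ, 1 ≤ k → ∀ x ∈ D k, F k x - x ∈ G)
    (u_req u_imp e : ℕ → EuclideanSpace ℝ (Fin 2))
    (hreq : ∀ k : ℕ, 1 ≤ k → u_req k ∈ A k)
    (he0 : e 0 = 0)
    (himp : ∀ k : ℕ, 1 ≤ k → u_imp k = F k (u_req k - e (k - 1)))
    (he : ∀ k : ℕ, 1 ≤ k → e k = e (k - 1) + u_imp k - u_req k) :
    ∀ k : ℕ, 1 ≤ k → u_req k - e (k - 1) ∈ D k ∧ e k ∈ G :=
  stmt17_general G hG0 hGsymm A D hD F happrox u_req u_imp e hreq he0 himp he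
end
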